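/- arXiv:1507.06296 — 13 statements merged into one kernel-verified Lean document; each statement's English description precedes it below -/
import Mathlib

section
/- Let X and Y be jointly distributed random variables on finite alphabets 𝒳 and 𝒴 with joint distribution P_{XY}. Then the mutual information satisfies I(X;Y) ≥ −E_Y[log E_X[𝟙(X∼Y)]] − E_X[log E_Y[𝟙(X∼Y)/E_X[𝟙(X∼Y)]]], where in each expression the inner and outer expectations are taken with respect to the marginal distributions P_X and P_Y of independent copies of X and Y. -/
open Finset Real

private lemma gibbs2 {𝒳 𝒴 : Type} [Fintype 𝒳] [Fintype 𝒴] (P Q : 𝒳 → 𝒴 → ℝ)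
    (hP : ∀ x y, 0 ≤ P x y) (hQ : ∀ x y, 0 ≤ Q x y)
    (hPQ : ∀ x y, 0 < P x y → 0 < Q x y)
    (hP1 : ∑ x, ∑ y, P x y = 1) (hQ1 : ∑ x, ∑ y, Q x y ≤ 1) :
    0 ≤ ∑ x, ∑ y, P x y * Real.logb 2 (P x y / Q x y) := by
  have key : ∑ x, ∑ y, P x y * Real.log (Q x y / P x y) ≤ 0 := by
    calc ∑ x, ∑ y, P x y * Real.log (Q x y / P x y) ≤ ∑ x, ∑ y, (Q x y - P x y) := by
          refine Finset.sum_le_sum fun x _ => Finset.sum_le_sum fun y _ => ?_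
          rcases (hP x y).eq_or_lt with h | h
          · simp [← h, hQ x y]
          · have hqi := hPQ x y h
            have hlog := Real.log_le_sub_one_of_pos (div_pos hqi h)
            calc P x y * Real.log (Q x y / P x y) ≤ P x y * (Q x y / P x y - 1) :=
                  mul_le_mul_of_nonneg_left hlog h.le
              _ = Q x y - P x y := by field_simp
      _ = (∑ x, ∑ y, Q x y) - ∑ x, ∑ y, P x y := by
          simp [Finset.sum_sub_distrib]
      _ ≤ 0 := by rw [hP1]; linarith
  have heq : ∑ x, ∑ y, P x y * Real.log (P x y / Q x y)
      = -∑ x, ∑ y, P x y * Real.log (Q x y / P x y) := by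
    rw [← Finset.sum_neg_distrib]
    refine Finset.sum_congr rfl fun x _ => ?_
    rw [← Finset.sum_neg_distrib]
    refine Finset.sum_congr rfl fun y _ => ?_
    rcases (hP x y).eq_or_lt with h | h
    · simp [← h]
    · have hqi := hPQ x y h
      rw [Real.log_div h.ne' hqi.ne', Real.log_div hqi.ne' h.ne']
      ring
  have hnn : 0 ≤ ∑ x, ∑ y, P x y * Real.log (P x y / Q x y) := by rw [heq]; linarith
  have hrw : ∑ x, ∑ y, P x y * Real.logb 2 (P x y / Q x y)
      = (∑ x, ∑ y, P x y * Real.log (P x y / Q x y)) / Real.log 2 := by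
    rw [Finset.sum_div]
    refine Finset.sum_congr rfl fun x _ => ?_
    rw [Finset.sum_div]
    refine Finset.sum_congr rfl fun y _ => ?_
    rw [Real.logb]
    ring
  rw [hrw]
  exact div_nonneg hnn (Real.log_nonneg (by norm_num))

private lemma mi_helper {𝒳 𝒴 : Type} [Fintype 𝒳] [Fintype 𝒴]
    (p : 𝒳 → 𝒴 → ℝ) (hp : ∀ x y, 0 ≤ p x y) (hsum : ∑ x, ∑ y, p x y = 1)
    (pX : 𝒳 → ℝ) (pY : 𝒴 → ℝ) (A : 𝒴 → ℝ) (B : 𝒳 → ℝ)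
    (hpX : ∀ x, pX x = ∑ y, p x y) (hpY : ∀ y, pY y = ∑ x, p x y)
    (hA : ∀ y, A y = ∑ x, pX x * (if 0 < p x y then (1:ℝ) else 0))
    (hB : ∀ x, B x = ∑ y, pY y * ((if 0 < p x y then (1:ℝ) else 0) / A y)) :
    (∑ x, ∑ y, p x y * Real.logb 2 (p x y / (pX x * pY y))) ≥
      -(∑ y, pY y * Real.logb 2 (A y)) - (∑ x, pX x * Real.logb 2 (B x)) := by
  classical
  have indnn : ∀ x y, (0:ℝ) ≤ (if 0 < p x y then (1:ℝ) else 0) := by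
    intro x y; split_ifs <;> norm_num
  have hpX0 : ∀ x, 0 ≤ pX x := fun x => (hpX x) ▸ Finset.sum_nonneg fun y _ => hp x y
  have hpY0 : ∀ y, 0 ≤ pY y := fun y => (hpY y) ▸ Finset.sum_nonneg fun x _ => hp x y
  have hpXpos : ∀ x y, 0 < p x y → 0 < pX x := fun x y h => by
    rw [hpX]
    exact lt_of_lt_of_le h (Finset.single_le_sum (fun y' _ => hp x y') (Finset.mem_univ y))
  have hpYpos : ∀ x y, 0 < p x y → 0 < pY y := fun x y h => by
    rw [hpY]
    exact lt_of_lt_of_le h (Finset.single_le_sum (fun x' _ => hp x' y) (Finset.mem_univ x))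
  have hA0 : ∀ y, 0 ≤ A y := fun y =>
    (hA y) ▸ Finset.sum_nonneg fun x _ => mul_nonneg (hpX0 x) (indnn x y)
  have hApos : ∀ x y, 0 < p x y → 0 < A y := fun x y h => by
    have h1 : pX x * (if 0 < p x y then (1:ℝ) else 0)
        ≤ ∑ x', pX x' * (if 0 < p x' y then (1:ℝ) else 0) :=
      Finset.single_le_sum (fun x' _ => mul_nonneg (hpX0 x') (indnn x' y)) (Finset.mem_univ x)
    rw [if_pos h, mul_one] at h1
    rw [hA]
    exact lt_of_lt_of_le (hpXpos x y h) h1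
  have hB0 : ∀ x, 0 ≤ B x := fun x =>
    (hB x) ▸ Finset.sum_nonneg fun y _ =>
      mul_nonneg (hpY0 y) (div_nonneg (indnn x y) (hA0 y))
  have hBpos : ∀ x y, 0 < p x y → 0 < B x := fun x y h => by
    have h1 : pY y * ((if 0 < p x y then (1:ℝ) else 0) / A y)
        ≤ ∑ y', pY y' * ((if 0 < p x y' then (1:ℝ) else 0) / A y') :=
      Finset.single_le_sum
        (fun y' _ => mul_nonneg (hpY0 y') (div_nonneg (indnn x y') (hA0 y')))
        (Finset.mem_univ y)
    rw [if_pos h] at h1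
    have h2 : 0 < pY y * (1 / A y) :=
      mul_pos (hpYpos x y h) (one_div_pos.mpr (hApos x y h))
    rw [hB]
    exact lt_of_lt_of_le h2 h1
  set Q : 𝒳 → 𝒴 → ℝ :=
    fun x y => pX x * pY y * (if 0 < p x y then (1:ℝ) else 0) / (A y * B x) with hQdef
  have hQ0 : ∀ x y, 0 ≤ Q x y := fun x y =>
    div_nonneg (mul_nonneg (mul_nonneg (hpX0 x) (hpY0 y)) (indnn x y))
      (mul_nonneg (hA0 y) (hB0 x))
  have hQpos : ∀ x y, 0 < p x y → 0 < Q x y := fun x y h => by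
    have : Q x y = pX x * pY y * (if 0 < p x y then (1:ℝ) else 0) / (A y * B x) := rfl
    rw [this, if_pos h, mul_one]
    exact div_pos (mul_pos (hpXpos x y h) (hpYpos x y h))
      (mul_pos (hApos x y h) (hBpos x y h))
  have hQ1 : ∑ x, ∑ y, Q x y ≤ 1 := by
    calc ∑ x, ∑ y, Q x y ≤ ∑ x, pX x := by
          refine Finset.sum_le_sum fun x _ => ?_
          have hfix : ∑ y, Q x y
              = (pX x / B x) * ∑ y, pY y * ((if 0 < p x y then (1:ℝ) else 0) / A y) := by
            rw [Finset.mul_sum]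
            refine Finset.sum_congr rfl fun y _ => ?_
            show pX x * pY y * _ / (A y * B x) = _
            ring
          rw [hfix, ← hB]
          rcases eq_or_ne (B x) 0 with h0 | h0
          · rw [h0]; simp [hpX0 x]
          · rw [div_mul_cancel₀ _ h0]
      _ = 1 := by
          rw [← hsum]
          exact Finset.sum_congr rfl fun x _ => hpX x
  have hS : 0 ≤ ∑ x, ∑ y, p x y * Real.logb 2 (p x y / Q x y) :=
    gibbs2 p Q hp hQ0 hQpos hsum hQ1
  have hTA : ∑ y, pY y * Real.logb 2 (A y) = ∑ x, ∑ y, p x y * Real.logb 2 (A y) := by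
    rw [Finset.sum_comm]
    refine Finset.sum_congr rfl fun y _ => ?_
    rw [hpY, Finset.sum_mul]
  have hTB : ∑ x, pX x * Real.logb 2 (B x) = ∑ x, ∑ y, p x y * Real.logb 2 (B x) := by
    refine Finset.sum_congr rfl fun x _ => ?_
    rw [hpX, Finset.sum_mul]
  have key : (∑ x, ∑ y, p x y * Real.logb 2 (p x y / (pX x * pY y)))
      + (∑ y, pY y * Real.logb 2 (A y)) + (∑ x, pX x * Real.logb 2 (B x))
      = ∑ x, ∑ y, p x y * Real.logb 2 (p x y / Q x y) := by
    rw [hTA, hTB, ← Finset.sum_add_distrib, ← Finset.sum_add_distrib]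
    refine Finset.sum_congr rfl fun x _ => ?_
    rw [← Finset.sum_add_distrib, ← Finset.sum_add_distrib]
    refine Finset.sum_congr rfl fun y _ => ?_
    rcases (hp x y).eq_or_lt with h | h
    · simp [← h]
    · have hx := hpXpos x y h
      have hy := hpYpos x y h
      have hA' := hApos x y h
      have hB' := hBpos x y h
      have hQeq : Q x y = pX x * pY y / (A y * B x) := by
        show pX x * pY y * _ / _ = _
        rw [if_pos h, mul_one]
      have harg : p x y / Q x y = (p x y / (pX x * pY y)) * A y * B x := by
        rw [hQeq]
        field_simp
      rw [harg, Real.logb_mul (by positivity) hB'.ne', Real.logb_mul (by positivity) hA'.ne']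
      ring
  linarith [hS, key]

/-!
Statement 0 (Theorem 1 of the paper): for jointly distributed random variables
`(X, Y)` on finite alphabets with joint distribution `p`, writing `x ∼ y` for
`p x y > 0`,
`I(X;Y) ≥ -E_Y log E_X 𝟙(X∼Y) - E_X log E_Y [𝟙(X∼Y) / E_X 𝟙(X∼Y)]`,
where inner/outer expectations are over independent draws from the marginals.
Logarithms are base 2 and `0 · log 0 = 0` (automatic in Lean).
-/

theorem mutual_information_adjacency_lower_bound
    {𝒳 𝒴 : Type} [Fintype 𝒳] [Fintype 𝒴]
    (p : 𝒳 → 𝒴 → ℝ)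
    (hp : ∀ x y, 0 ≤ p x y)
    (hsum : ∑ x, ∑ y, p x y = 1) :
    (∑ x, ∑ y, p x y * Real.logb 2 (p x y / ((∑ y', p x y') * (∑ x', p x' y)))) ≥
      -(∑ y, (∑ x', p x' y) *
          Real.logb 2 (∑ x, (∑ y', p x y') * (if 0 < p x y then (1 : ℝ) else 0)))
      - (∑ x, (∑ y', p x y') *
          Real.logb 2 (∑ y, (∑ x', p x' y) *
            ((if 0 < p x y then (1 : ℝ) else 0) /
              (∑ x', (∑ y'', p x' y'') * (if 0 < p x' y then (1 : ℝ) else 0))))) := by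
  exact mi_helper p hp hsum (fun x => ∑ y', p x y') (fun y => ∑ x', p x' y)
    (fun y => ∑ x, (∑ y', p x y') * (if 0 < p x y then (1:ℝ) else 0))
    (fun x => ∑ y, (∑ x', p x' y) *
      ((if 0 < p x y then (1:ℝ) else 0) /
        (∑ x', (∑ y'', p x' y'') * (if 0 < p x' y then (1:ℝ) else 0))))
    (fun _ => rfl) (fun _ => rfl) (fun _ => rfl) (fun _ => rfl)
end

section
/- Let X and Y be jointly distributed random variables on finite alphabets with joint distribution P_{XY}. Then I(X;Y) ≥ −E_Y[log E_X[𝟙(X∼Y)]], where the inner expectation is over X ∼ P_X and the outer over Y ∼ P_Y with X and Y drawn independently. -/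
/-!
Statement 1: for jointly distributed random variables `(X, Y)` on finite
alphabets with joint distribution `p`, writing `x ∼ y` for `p x y > 0`,
`I(X;Y) ≥ -E_Y log E_X 𝟙(X∼Y)`, with `X ∼ P_X` inside and `Y ∼ P_Y` outside,
drawn independently.  Logarithms are base 2, `0·log 0 = 0`.
-/

open Finset

theorem aux_key {𝒳 𝒴 : Type} [Fintype 𝒳] [Fintype 𝒴]
    (p : 𝒳 → 𝒴 → ℝ) (PX : 𝒳 → ℝ) (PY : 𝒴 → ℝ) (q : 𝒴 → ℝ)
    (hp : ∀ x y, 0 ≤ p x y) (hsum : ∑ x, ∑ y, p x y = 1)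
    (hPX : ∀ x, PX x = ∑ y', p x y') (hPY : ∀ y, PY y = ∑ x', p x' y)
    (hq : ∀ y, q y = ∑ x, PX x * (if 0 < p x y then (1:ℝ) else 0)) :
    0 ≤ (∑ x, ∑ y, p x y * Real.log (p x y / (PX x * PY y))) +
        ∑ y, PY y * Real.log (q y) := by
  have hPXnn : ∀ x, 0 ≤ PX x := fun x => (hPX x) ▸ Finset.sum_nonneg (fun i _ => hp x i)
  have hPYnn : ∀ y, 0 ≤ PY y := fun y => (hPY y) ▸ Finset.sum_nonneg (fun i _ => hp i y)
  have hitenn : ∀ x y, (0:ℝ) ≤ PX x * (if 0 < p x y then (1:ℝ) else 0) := by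
    intro x y
    apply mul_nonneg (hPXnn x)
    split <;> norm_num
  have hPXpos : ∀ x y, 0 < p x y → 0 < PX x := by
    intro x y h
    rw [hPX]
    exact lt_of_lt_of_le h (Finset.single_le_sum (fun i _ => hp x i) (Finset.mem_univ y))
  have hPYpos : ∀ x y, 0 < p x y → 0 < PY y := by
    intro x y h
    rw [hPY]
    exact lt_of_lt_of_le h (Finset.single_le_sum (fun i _ => hp i y) (Finset.mem_univ x))
  have hqpos : ∀ x y, 0 < p x y → 0 < q y := by
    intro x y h
    rw [hq]
    have h1 : PX x * (if 0 < p x y then (1:ℝ) else 0) = PX x := by simp [h]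
    have h2 : PX x * (if 0 < p x y then (1:ℝ) else 0) ≤
        ∑ x', PX x' * (if 0 < p x' y then (1:ℝ) else 0) :=
      Finset.single_le_sum (fun i _ => hitenn i y) (Finset.mem_univ x)
    calc (0:ℝ) < PX x := hPXpos x y h
      _ = _ := h1.symm
      _ ≤ _ := h2
  -- step 1: rewrite second sum as double sum
  have step1 : ∑ y, PY y * Real.log (q y) = ∑ x, ∑ y, p x y * Real.log (q y) := by
    rw [Finset.sum_comm]
    apply Finset.sum_congr rfl
    intro y _
    rw [hPY, Finset.sum_mul]
  -- termwise inequality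
  have step2 : ∀ x y, p x y - (if 0 < p x y then PX x * PY y / q y else 0) ≤
      p x y * Real.log (p x y / (PX x * PY y)) + p x y * Real.log (q y) := by
    intro x y
    by_cases h : 0 < p x y
    · have hx := hPXpos x y h
      have hy := hPYpos x y h
      have hqy := hqpos x y h
      rw [if_pos h, ← mul_add]
      have hlog : Real.log (p x y / (PX x * PY y)) + Real.log (q y) =
          Real.log (p x y * q y / (PX x * PY y)) := by
        rw [← Real.log_mul (by positivity) (ne_of_gt hqy), div_mul_eq_mul_div]
      rw [hlog]
      have ht : (0:ℝ) < (PX x * PY y) / (p x y * q y) := by positivity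
      have h1 : Real.log ((PX x * PY y) / (p x y * q y)) ≤
          (PX x * PY y) / (p x y * q y) - 1 := Real.log_le_sub_one_of_pos ht
      have h2 : Real.log (p x y * q y / (PX x * PY y)) =
          - Real.log ((PX x * PY y) / (p x y * q y)) := by
        rw [← Real.log_inv, inv_div]
      rw [h2]
      have h3 : p x y * ((PX x * PY y) / (p x y * q y)) = PX x * PY y / q y := by
        field_simp
      nlinarith [mul_le_mul_of_nonneg_left h1 (le_of_lt h)]
    · have hz : p x y = 0 := le_antisymm (not_lt.mp h) (hp x y)
      simp [hz, h]
  -- sum of the correction terms is 1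
  have step3 : ∑ x, ∑ y, (if 0 < p x y then PX x * PY y / q y else 0) = 1 := by
    rw [Finset.sum_comm]
    have inner : ∀ y, ∑ x, (if 0 < p x y then PX x * PY y / q y else 0) = PY y := by
      intro y
      by_cases hqy : q y = 0
      · have hall : ∀ x, p x y = 0 := by
          intro x
          by_contra hc
          exact (hqpos x y (lt_of_le_of_ne (hp x y) (Ne.symm hc))).ne' hqy
        have : PY y = 0 := by rw [hPY]; exact Finset.sum_eq_zero (fun i _ => hall i)
        simp [hall, this]
      · have hrw : ∑ x, (if 0 < p x y then PX x * PY y / q y else 0) =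
            (PY y / q y) * ∑ x, PX x * (if 0 < p x y then (1:ℝ) else 0) := by
          rw [Finset.mul_sum]
          apply Finset.sum_congr rfl
          intro x _
          by_cases h : 0 < p x y <;> simp [h] <;> ring
        rw [hrw, ← hq y]
        field_simp
    rw [Finset.sum_congr rfl (fun y _ => inner y)]
    calc ∑ y, PY y = ∑ y, ∑ x', p x' y := Finset.sum_congr rfl (fun y _ => hPY y)
      _ = 1 := by rw [Finset.sum_comm]; exact hsum
  calc (0:ℝ) = (∑ x, ∑ y, p x y) - ∑ x, ∑ y, (if 0 < p x y then PX x * PY y / q y else 0) := by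
        rw [hsum, step3]; ring
    _ = ∑ x, ∑ y, (p x y - (if 0 < p x y then PX x * PY y / q y else 0)) := by
        rw [← Finset.sum_sub_distrib]
        exact Finset.sum_congr rfl (fun x _ => (Finset.sum_sub_distrib _ _).symm)
    _ ≤ ∑ x, ∑ y, (p x y * Real.log (p x y / (PX x * PY y)) + p x y * Real.log (q y)) :=
        Finset.sum_le_sum (fun x _ => Finset.sum_le_sum (fun y _ => step2 x y))
    _ = (∑ x, ∑ y, p x y * Real.log (p x y / (PX x * PY y))) +
        ∑ x, ∑ y, p x y * Real.log (q y) := by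
        rw [← Finset.sum_add_distrib]
        exact Finset.sum_congr rfl (fun x _ => Finset.sum_add_distrib)
    _ = _ := by rw [step1]

theorem mutual_information_weak_adjacency_lower_bound
    {𝒳 𝒴 : Type} [Fintype 𝒳] [Fintype 𝒴]
    (p : 𝒳 → 𝒴 → ℝ)
    (hp : ∀ x y, 0 ≤ p x y)
    (hsum : ∑ x, ∑ y, p x y = 1) :
    (∑ x, ∑ y, p x y * Real.logb 2 (p x y / ((∑ y', p x y') * (∑ x', p x' y)))) ≥
      -(∑ y, (∑ x', p x' y) *
          Real.logb 2 (∑ x, (∑ y', p x y') * (if 0 < p x y then (1 : ℝ) else 0))) := by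
  have key := aux_key p (fun x => ∑ y', p x y') (fun y => ∑ x', p x' y)
      (fun y => ∑ x, (∑ y', p x y') * (if 0 < p x y then (1:ℝ) else 0)) hp hsum
      (fun _ => rfl) (fun _ => rfl) (fun _ => rfl)
  have h2 : (0:ℝ) < Real.log 2 := Real.log_pos (by norm_num)
  have e1 : (∑ x, ∑ y, p x y * Real.logb 2 (p x y / ((∑ y', p x y') * (∑ x', p x' y)))) =
      (∑ x, ∑ y, p x y * Real.log (p x y / ((∑ y', p x y') * (∑ x', p x' y)))) / Real.log 2 := by
    rw [Finset.sum_div]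
    refine Finset.sum_congr rfl (fun x _ => ?_)
    rw [Finset.sum_div]
    refine Finset.sum_congr rfl (fun y _ => ?_)
    rw [Real.logb, mul_div_assoc]
  have e2 : (∑ y, (∑ x', p x' y) *
        Real.logb 2 (∑ x, (∑ y', p x y') * (if 0 < p x y then (1:ℝ) else 0))) =
      (∑ y, (∑ x', p x' y) *
        Real.log (∑ x, (∑ y', p x y') * (if 0 < p x y then (1:ℝ) else 0))) / Real.log 2 := by
    rw [Finset.sum_div]
    refine Finset.sum_congr rfl (fun y _ => ?_)
    rw [Real.logb, mul_div_assoc]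
  rw [ge_iff_le, e1, e2, ← neg_div, div_le_div_iff_of_pos_right h2]
  linarith [key]
end

section
/- Let X be a random variable on a finite alphabet 𝒳 with distribution P_X, let 𝒜 be a finite set of functions from 𝒳 to a finite alphabet 𝒴, let A ∼ P_A on 𝒜 be independent of X, and set Y = A(X). Then I(X;Y) ≤ H(Y) + E_A[log E_{X,Y}[𝟙(A(X)=Y)]] + E_{X,Y}[log E_A[𝟙(A(X)=Y)/E_{X,Y}[𝟙(A(X)=Y)]]], where E_{X,Y} is with respect to the joint distribution of (X,Y) and E_A is with respect to P_A, independent of (X,Y). Moreover, both the second and third terms on the right-hand side are non-positive. -/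
/-!
Statement 2 (Theorem 2 of the paper): let `X ∼ pX` on a finite alphabet, let
`A ∼ pA` be a random function `𝒳 → 𝒴` (drawn from the finite set of all
functions, whose support is the action set `𝒜`), independent of `X`, and set
`Y = A(X)`.  The joint law of `(X,Y)` is `pJ x y = pX x * ∑ a, pA a * 𝟙(a x = y)`.
Then
`I(X;Y) ≤ H(Y) + E_A log E_{X,Y} 𝟙(A(X)=Y)
              + E_{X,Y} log E_A [𝟙(A(X)=Y) / E_{X,Y} 𝟙(A(X)=Y)]`,
and moreover both the second and the third terms are non-positive.
Logarithms base 2, `0·log 0 = 0`.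
-/

lemma aux_core_log (r s qa : ℝ) (hr : 0 < r) (hs : 0 < s) (hq : 0 < qa) :
    Real.logb 2 r - Real.logb 2 s - Real.logb 2 qa ≤ (r / (s * qa) - 1) / Real.log 2 := by
  have h2 : (0:ℝ) < Real.log 2 := Real.log_pos one_lt_two
  have hu : (0:ℝ) < r / (s * qa) := by positivity
  have hlog := Real.log_le_sub_one_of_pos hu
  rw [Real.log_div (ne_of_gt hr) (by positivity),
    Real.log_mul (ne_of_gt hs) (ne_of_gt hq)] at hlog
  simp only [Real.logb]
  rw [div_sub_div_same, div_sub_div_same, div_le_div_iff₀ h2 h2]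
  nlinarith [hlog]

lemma aux_logb_le (s : ℝ) (hs : 0 < s) :
    Real.logb 2 s ≤ (s - 1) / Real.log 2 := by
  have h2 : (0:ℝ) < Real.log 2 := Real.log_pos one_lt_two
  have hlog := Real.log_le_sub_one_of_pos hs
  simp only [Real.logb]
  exact div_le_div_of_nonneg_right hlog h2.le


theorem mutual_information_action_upper_bound
    {𝒳 𝒴 : Type} [Fintype 𝒳] [Fintype 𝒴] [DecidableEq 𝒳] [DecidableEq 𝒴]
    (pX : 𝒳 → ℝ) (hpX : ∀ x, 0 ≤ pX x) (hpX1 : ∑ x, pX x = 1)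
    (pA : (𝒳 → 𝒴) → ℝ) (hpA : ∀ a, 0 ≤ pA a) (hpA1 : ∑ a, pA a = 1)
    -- joint law of (X, Y) with Y = A(X)
    (pJ : 𝒳 → 𝒴 → ℝ)
    (hpJ : ∀ x y, pJ x y = pX x * ∑ a, pA a * (if a x = y then (1 : ℝ) else 0))
    -- marginal of Y
    (pY : 𝒴 → ℝ) (hpY : ∀ y, pY y = ∑ x, pJ x y)
    -- probability that a fixed action a agrees with an independent draw of (X,Y)
    (q : (𝒳 → 𝒴) → ℝ)
    (hq : ∀ a, q a = ∑ x, ∑ y, pJ x y * (if a x = y then (1 : ℝ) else 0)) :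
    (∑ x, ∑ y, pJ x y * Real.logb 2 (pJ x y / (pX x * pY y))) ≤
        (-(∑ y, pY y * Real.logb 2 (pY y)))
        + (∑ a, pA a * Real.logb 2 (q a))
        + (∑ x, ∑ y, pJ x y *
            Real.logb 2 (∑ a, pA a * ((if a x = y then (1 : ℝ) else 0) / q a)))
      ∧ (∑ a, pA a * Real.logb 2 (q a)) ≤ 0
      ∧ (∑ x, ∑ y, pJ x y *
            Real.logb 2 (∑ a, pA a * ((if a x = y then (1 : ℝ) else 0) / q a))) ≤ 0 := by
  classical
  have h2 : (0:ℝ) < Real.log 2 := Real.log_pos one_lt_two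
  have hite : ∀ (a : 𝒳 → 𝒴) (x : 𝒳) (y : 𝒴),
      (0:ℝ) ≤ (if a x = y then (1 : ℝ) else 0) := by
    intro a x y; split <;> norm_num
  have hr_nonneg : ∀ x y, (0:ℝ) ≤ ∑ a, pA a * (if a x = y then (1 : ℝ) else 0) :=
    fun x y => Finset.sum_nonneg fun a _ => mul_nonneg (hpA a) (hite a x y)
  have hpJ_nonneg : ∀ x y, 0 ≤ pJ x y := fun x y => by
    rw [hpJ]; exact mul_nonneg (hpX x) (hr_nonneg x y)
  have hpY_nonneg : ∀ y, 0 ≤ pY y := fun y => by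
    rw [hpY]; exact Finset.sum_nonneg fun x _ => hpJ_nonneg x y
  have hpJ_le_pY : ∀ x y, pJ x y ≤ pY y := fun x y => by
    rw [hpY]; exact Finset.single_le_sum (fun x' _ => hpJ_nonneg x' y) (Finset.mem_univ x)
  have hrow : ∀ x, ∑ y, ∑ a, pA a * (if a x = y then (1 : ℝ) else 0) = 1 := by
    intro x
    rw [Finset.sum_comm]
    have h1 : ∀ a : 𝒳 → 𝒴, ∑ y, pA a * (if a x = y then (1 : ℝ) else 0) = pA a := by
      intro a; rw [← Finset.mul_sum]; simp
    rw [Finset.sum_congr rfl fun a _ => h1 a, hpA1]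
  have hJrow : ∀ x, ∑ y, pJ x y = pX x := by
    intro x
    simp only [hpJ]
    rw [← Finset.mul_sum, hrow x, mul_one]
  have hJsum : ∑ x, ∑ y, pJ x y = 1 := by
    rw [Finset.sum_congr rfl fun x _ => hJrow x, hpX1]
  have hq_nonneg : ∀ a, 0 ≤ q a := fun a => by
    rw [hq]
    exact Finset.sum_nonneg fun x _ => Finset.sum_nonneg fun y _ =>
      mul_nonneg (hpJ_nonneg x y) (hite a x y)
  have hq_le_one : ∀ a, q a ≤ 1 := by
    intro a
    have h : q a ≤ ∑ x, ∑ y, pJ x y := by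
      rw [hq]
      refine Finset.sum_le_sum fun x _ => Finset.sum_le_sum fun y _ => ?_
      have h' : (if a x = y then (1:ℝ) else 0) ≤ 1 := by split <;> norm_num
      exact mul_le_of_le_one_right (hpJ_nonneg x y) h'
    linarith [hJsum]
  have hq_ge : ∀ (a : 𝒳 → 𝒴) x y, a x = y → pJ x y ≤ q a := by
    intro a x y h
    rw [hq]
    calc pJ x y = pJ x y * (if a x = y then (1:ℝ) else 0) := by rw [if_pos h, mul_one]
      _ ≤ ∑ y', pJ x y' * (if a x = y' then (1:ℝ) else 0) :=
          Finset.single_le_sum (fun y' _ => mul_nonneg (hpJ_nonneg x y') (hite a x y'))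
            (Finset.mem_univ y)
      _ ≤ ∑ x', ∑ y', pJ x' y' * (if a x' = y' then (1:ℝ) else 0) :=
          Finset.single_le_sum
            (fun x' _ => Finset.sum_nonneg fun y' _ =>
              mul_nonneg (hpJ_nonneg x' y') (hite a x' y'))
            (Finset.mem_univ x)
  have hpX_pos : ∀ x y, 0 < pJ x y → 0 < pX x := by
    intro x y h
    rcases (hpX x).lt_or_eq with h' | h'
    · exact h'
    · exfalso; rw [hpJ, ← h', zero_mul] at h; exact lt_irrefl _ h
  have hr_pos : ∀ x y, 0 < pJ x y →
      0 < ∑ a, pA a * (if a x = y then (1 : ℝ) else 0) := by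
    intro x y h
    have hx := hpX_pos x y h
    rw [hpJ] at h
    by_contra hc
    push_neg at hc
    have h0 : ∑ a, pA a * (if a x = y then (1 : ℝ) else 0) = 0 :=
      le_antisymm hc (hr_nonneg x y)
    rw [h0, mul_zero] at h
    exact lt_irrefl _ h
  have hwit : ∀ x y, 0 < pJ x y → ∃ a, 0 < pA a ∧ a x = y := by
    intro x y h
    have hr := hr_pos x y h
    have h0 : ∑ a : 𝒳 → 𝒴, (0:ℝ) < ∑ a, pA a * (if a x = y then (1 : ℝ) else 0) := by
      simpa using hr
    obtain ⟨a, _, ha⟩ := Finset.exists_lt_of_sum_lt h0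
    by_cases hxy : a x = y
    · refine ⟨a, ?_, hxy⟩
      rw [if_pos hxy, mul_one] at ha; exact ha
    · rw [if_neg hxy, mul_zero] at ha; exact absurd ha (lt_irrefl 0)
  have hS_pos : ∀ x y, 0 < pJ x y →
      (0:ℝ) < ∑ a, pA a * ((if a x = y then (1 : ℝ) else 0) / q a) := by
    intro x y h
    obtain ⟨a, hpa, hxy⟩ := hwit x y h
    have hqa : 0 < q a := lt_of_lt_of_le h (hq_ge a x y hxy)
    refine Finset.sum_pos' (fun b _ =>
      mul_nonneg (hpA b) (div_nonneg (hite b x y) (hq_nonneg b))) ⟨a, Finset.mem_univ a, ?_⟩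
    rw [if_pos hxy]
    positivity
  -- Part 2
  have part2 : (∑ a, pA a * Real.logb 2 (q a)) ≤ 0 := by
    refine Finset.sum_nonpos fun a _ => mul_nonpos_of_nonneg_of_nonpos (hpA a) ?_
    exact Real.logb_nonpos one_lt_two (hq_nonneg a) (hq_le_one a)
  -- Part 3
  have hJS_le : ∑ x, ∑ y, pJ x y *
      (∑ a, pA a * ((if a x = y then (1 : ℝ) else 0) / q a)) ≤ 1 := by
    have hswap : ∑ x, ∑ y, pJ x y *
        (∑ a, pA a * ((if a x = y then (1 : ℝ) else 0) / q a))
        = ∑ a, (pA a / q a) * (∑ x, ∑ y, pJ x y * (if a x = y then (1 : ℝ) else 0)) := by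
      simp only [Finset.mul_sum]
      rw [Finset.sum_congr rfl fun x _ => Finset.sum_comm, Finset.sum_comm]
      refine Finset.sum_congr rfl fun a _ => Finset.sum_congr rfl fun x _ =>
        Finset.sum_congr rfl fun y _ => ?_
      ring
    rw [hswap]
    have hterm : ∀ a : 𝒳 → 𝒴,
        (pA a / q a) * (∑ x, ∑ y, pJ x y * (if a x = y then (1 : ℝ) else 0)) ≤ pA a := by
      intro a
      rw [← hq a]
      rcases (hq_nonneg a).lt_or_eq with h | h
      · rw [div_mul_cancel₀ _ (ne_of_gt h)]
      · rw [← h, mul_zero]; exact hpA a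
    calc ∑ a, (pA a / q a) * (∑ x, ∑ y, pJ x y * (if a x = y then (1 : ℝ) else 0))
        ≤ ∑ a, pA a := Finset.sum_le_sum fun a _ => hterm a
      _ = 1 := hpA1
  have part3 : (∑ x, ∑ y, pJ x y *
      Real.logb 2 (∑ a, pA a * ((if a x = y then (1 : ℝ) else 0) / q a))) ≤ 0 := by
    have step : ∀ x y, pJ x y *
        Real.logb 2 (∑ a, pA a * ((if a x = y then (1 : ℝ) else 0) / q a))
        ≤ (pJ x y * (∑ a, pA a * ((if a x = y then (1 : ℝ) else 0) / q a)) - pJ x y)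
            / Real.log 2 := by
      intro x y
      rcases (hpJ_nonneg x y).lt_or_eq with h | h
      · have hb := aux_logb_le _ (hS_pos x y h)
        calc pJ x y * Real.logb 2 (∑ a, pA a * ((if a x = y then (1 : ℝ) else 0) / q a))
            ≤ pJ x y * (((∑ a, pA a * ((if a x = y then (1 : ℝ) else 0) / q a)) - 1)
              / Real.log 2) := mul_le_mul_of_nonneg_left hb h.le
          _ = (pJ x y * (∑ a, pA a * ((if a x = y then (1 : ℝ) else 0) / q a)) - pJ x y)
              / Real.log 2 := by ring
      · rw [← h]; simp
    calc (∑ x, ∑ y, pJ x y *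
        Real.logb 2 (∑ a, pA a * ((if a x = y then (1 : ℝ) else 0) / q a)))
        ≤ ∑ x, ∑ y, (pJ x y * (∑ a, pA a * ((if a x = y then (1 : ℝ) else 0) / q a))
            - pJ x y) / Real.log 2 :=
          Finset.sum_le_sum fun x _ => Finset.sum_le_sum fun y _ => step x y
      _ = ((∑ x, ∑ y, pJ x y * (∑ a, pA a * ((if a x = y then (1 : ℝ) else 0) / q a)))
            - ∑ x, ∑ y, pJ x y) / Real.log 2 := by
          simp only [sub_div, Finset.sum_sub_distrib, Finset.sum_div]
      _ ≤ 0 := by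
          rw [hJsum]
          apply div_nonpos_of_nonpos_of_nonneg _ h2.le
          linarith [hJS_le]
  -- Part 1
  have hL : ∀ x y, pJ x y * Real.logb 2 (pJ x y / (pX x * pY y)) =
      pJ x y * Real.logb 2 (∑ a, pA a * (if a x = y then (1:ℝ) else 0))
      - pJ x y * Real.logb 2 (pY y) := by
    intro x y
    rcases (hpJ_nonneg x y).lt_or_eq with h | h
    · have hx := hpX_pos x y h
      have hr := hr_pos x y h
      have hy : 0 < pY y := lt_of_lt_of_le h (hpJ_le_pY x y)
      have hd : pJ x y / (pX x * pY y)
          = (∑ a, pA a * (if a x = y then (1:ℝ) else 0)) / pY y := by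
        rw [hpJ x y, mul_div_mul_left _ _ (ne_of_gt hx)]
      rw [hd, Real.logb_div (ne_of_gt hr) (ne_of_gt hy)]
      ring
    · rw [← h]; simp
  have hLHSeq : (∑ x, ∑ y, pJ x y * Real.logb 2 (pJ x y / (pX x * pY y)))
      = (∑ x, ∑ y, pJ x y * Real.logb 2 (∑ a, pA a * (if a x = y then (1:ℝ) else 0)))
        - (∑ y, pY y * Real.logb 2 (pY y)) := by
    have h1 : ∑ x, ∑ y, pJ x y * Real.logb 2 (pY y)
        = ∑ y, pY y * Real.logb 2 (pY y) := by
      rw [Finset.sum_comm]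
      refine Finset.sum_congr rfl fun y _ => ?_
      rw [← Finset.sum_mul, ← hpY]
    rw [← h1, ← Finset.sum_sub_distrib]
    refine Finset.sum_congr rfl fun x _ => ?_
    rw [← Finset.sum_sub_distrib]
    exact Finset.sum_congr rfl fun y _ => hL x y
  -- key pointwise inequality
  have key : ∀ x y, pJ x y * Real.logb 2 (∑ a, pA a * (if a x = y then (1:ℝ) else 0))
      - pJ x y * Real.logb 2 (∑ a, pA a * ((if a x = y then (1:ℝ) else 0) / q a))
      ≤ ∑ a, pX x * (pA a * (if a x = y then (1:ℝ) else 0) * Real.logb 2 (q a)) := by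
    intro x y
    rcases (hpJ_nonneg x y).lt_or_eq with h | h
    · set R := ∑ a, pA a * (if a x = y then (1:ℝ) else 0) with hR
      set S := ∑ a, pA a * ((if a x = y then (1:ℝ) else 0) / q a) with hS
      have hx := hpX_pos x y h
      have hRpos : 0 < R := hr_pos x y h
      have hSpos : 0 < S := hS_pos x y h
      have hpJR : pJ x y = pX x * R := by rw [hpJ x y, hR]
      have inner : ∀ a : 𝒳 → 𝒴, pA a * (if a x = y then (1:ℝ) else 0) *
          (Real.logb 2 R - Real.logb 2 S - Real.logb 2 (q a))
          ≤ pA a * (if a x = y then (1:ℝ) else 0) * ((R / (S * q a) - 1) / Real.log 2) := by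
        intro a
        by_cases hxy : a x = y
        · rw [if_pos hxy]
          have hqa : 0 < q a := lt_of_lt_of_le h (hq_ge a x y hxy)
          have hc := aux_core_log R S (q a) hRpos hSpos hqa
          simp only [mul_one]
          exact mul_le_mul_of_nonneg_left hc (hpA a)
        · rw [if_neg hxy]; simp
      have hzero : ∑ a, pA a * (if a x = y then (1:ℝ) else 0) *
          ((R / (S * q a) - 1) / Real.log 2) = 0 := by
        have hterm : ∀ a : 𝒳 → 𝒴, pA a * (if a x = y then (1:ℝ) else 0) *
            ((R / (S * q a) - 1) / Real.log 2)
            = ((pA a * ((if a x = y then (1:ℝ) else 0) / q a)) * (R / S)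
               - pA a * (if a x = y then (1:ℝ) else 0)) / Real.log 2 := by
          intro a
          simp only [div_eq_mul_inv, mul_inv]
          ring
        rw [Finset.sum_congr rfl fun a _ => hterm a, ← Finset.sum_div,
          Finset.sum_sub_distrib, ← Finset.sum_mul, ← hS, ← hR, mul_comm S (R / S),
          div_mul_cancel₀ _ (ne_of_gt hSpos), sub_self, zero_div]
      have hmain : ∑ a, pA a * (if a x = y then (1:ℝ) else 0) *
          (Real.logb 2 R - Real.logb 2 S - Real.logb 2 (q a)) ≤ 0 := by
        calc ∑ a, pA a * (if a x = y then (1:ℝ) else 0) *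
            (Real.logb 2 R - Real.logb 2 S - Real.logb 2 (q a))
            ≤ ∑ a, pA a * (if a x = y then (1:ℝ) else 0) *
              ((R / (S * q a) - 1) / Real.log 2) := Finset.sum_le_sum fun a _ => inner a
          _ = 0 := hzero
      have hfold : ∀ c : ℝ,
          ∑ a, pX x * (pA a * (if a x = y then (1:ℝ) else 0) * c) = pX x * R * c := by
        intro c
        rw [← Finset.mul_sum, ← Finset.sum_mul, ← hR, mul_assoc]
      have e1 : ∀ a : 𝒳 → 𝒴, pX x * (pA a * (if a x = y then (1:ℝ) else 0) *
            (Real.logb 2 R - Real.logb 2 S - Real.logb 2 (q a)))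
          = pX x * (pA a * (if a x = y then (1:ℝ) else 0) * Real.logb 2 R)
            - pX x * (pA a * (if a x = y then (1:ℝ) else 0) * Real.logb 2 S)
            - pX x * (pA a * (if a x = y then (1:ℝ) else 0) * Real.logb 2 (q a)) :=
        fun a => by ring
      have hid : pX x * (∑ a, pA a * (if a x = y then (1:ℝ) else 0) *
            (Real.logb 2 R - Real.logb 2 S - Real.logb 2 (q a)))
          = (pJ x y * Real.logb 2 R - pJ x y * Real.logb 2 S)
            - ∑ a, pX x * (pA a * (if a x = y then (1:ℝ) else 0) * Real.logb 2 (q a)) := by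
        rw [Finset.mul_sum, Finset.sum_congr rfl fun a _ => e1 a,
          Finset.sum_sub_distrib, Finset.sum_sub_distrib, hfold, hfold, hpJR]
      have hnp : pX x * (∑ a, pA a * (if a x = y then (1:ℝ) else 0) *
          (Real.logb 2 R - Real.logb 2 S - Real.logb 2 (q a))) ≤ 0 :=
        mul_nonpos_of_nonneg_of_nonpos (hpX x) hmain
      linarith [hid, hnp]
    · rw [← h]
      have hz : ∑ a, pX x * (pA a * (if a x = y then (1:ℝ) else 0) * Real.logb 2 (q a))
          = 0 := by
        rcases eq_or_ne (pX x) 0 with hx | hx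
        · simp [hx]
        · have hR0 : (∑ a, pA a * (if a x = y then (1:ℝ) else 0)) = 0 := by
            have h' := hpJ x y
            rw [← h] at h'
            rcases mul_eq_zero.mp h'.symm with h'' | h''
            · exact absurd h'' hx
            · exact h''
          refine Finset.sum_eq_zero fun a _ => ?_
          by_cases hxy : a x = y
          · have hle : pA a ≤ ∑ a', pA a' * (if a' x = y then (1:ℝ) else 0) := by
              calc pA a = pA a * (if a x = y then (1:ℝ) else 0) := by
                    rw [if_pos hxy, mul_one]
                _ ≤ _ := Finset.single_le_sum
                    (fun a' _ => mul_nonneg (hpA a') (hite a' x y)) (Finset.mem_univ a)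
            have hpa0 : pA a = 0 := le_antisymm (hR0 ▸ hle) (hpA a)
            rw [hpa0]; ring
          · rw [if_neg hxy]; ring
      rw [hz]
      simp
  have hsum : ∑ x, ∑ y, ∑ a, pX x * (pA a * (if a x = y then (1:ℝ) else 0)
      * Real.logb 2 (q a)) = ∑ a, pA a * Real.logb 2 (q a) := by
    rw [Finset.sum_congr rfl fun x _ => Finset.sum_comm, Finset.sum_comm]
    refine Finset.sum_congr rfl fun a _ => ?_
    have hy : ∀ x' : 𝒳, ∑ y, pX x' * (pA a * (if a x' = y then (1:ℝ) else 0)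
        * Real.logb 2 (q a)) = pX x' * (pA a * Real.logb 2 (q a)) := by
      intro x'
      rw [← Finset.mul_sum]
      congr 1
      rw [← Finset.sum_mul]
      rw [show (∑ y, pA a * (if a x' = y then (1:ℝ) else 0)) = pA a from by
        rw [← Finset.mul_sum]; simp]
    rw [Finset.sum_congr rfl fun x' _ => hy x', ← Finset.sum_mul, hpX1, one_mul]
  have keysum : (∑ x, ∑ y, pJ x y * Real.logb 2 (∑ a, pA a * (if a x = y then (1:ℝ) else 0)))
      - (∑ x, ∑ y, pJ x y * Real.logb 2 (∑ a, pA a * ((if a x = y then (1:ℝ) else 0) / q a)))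
      ≤ ∑ a, pA a * Real.logb 2 (q a) := by
    calc (∑ x, ∑ y, pJ x y * Real.logb 2 (∑ a, pA a * (if a x = y then (1:ℝ) else 0)))
        - (∑ x, ∑ y, pJ x y * Real.logb 2 (∑ a, pA a * ((if a x = y then (1:ℝ) else 0) / q a)))
        ≤ ∑ x, ∑ y, ∑ a, pX x * (pA a * (if a x = y then (1:ℝ) else 0)
            * Real.logb 2 (q a)) := by
          rw [← Finset.sum_sub_distrib]
          refine Finset.sum_le_sum fun x _ => ?_
          rw [← Finset.sum_sub_distrib]
          exact Finset.sum_le_sum fun y _ => key x y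
      _ = ∑ a, pA a * Real.logb 2 (q a) := hsum
  refine ⟨?_, part2, part3⟩
  rw [hLHSeq]
  linarith [keysum]
end

section
/- (Donsker–Varadhan variational formula, discrete case.) Let P be a probability distribution on a finite set 𝒳 and let f : 𝒳 → [0,∞) be such that f(x) > 0 for every x with P(x) > 0 (so E_P[log f(X)] is finite). Then E_P[log f(X)] = min over all probability distributions Q on 𝒳 with Q ≪ P (i.e., P(x)=0 implies Q(x)=0) of ( log E_Q[f(X)] + D(P‖Q) ), and the minimum is uniquely attained by Q*(x) = (P(x)/f(x)) / E_P[1/f(X)], with the convention 1/f(x)=0 when f(x)=0. -/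
private lemma dv_key {𝒳 : Type} [Fintype 𝒳]
    (P Q f : 𝒳 → ℝ) (hP : ∀ x, 0 ≤ P x) (hP1 : ∑ x, P x = 1)
    (hf : ∀ x, 0 ≤ f x) (hfpos : ∀ x, 0 < P x → 0 < f x)
    (hQ0 : ∀ x, 0 ≤ Q x) (hQ1 : ∑ x, Q x = 1)
    (hQP : ∀ x, P x = 0 → Q x = 0) (hPQ : ∀ x, Q x = 0 → P x = 0) :
    (∑ x, P x * Real.log (f x)) ≤
      Real.log (∑ x, Q x * f x) + ∑ x, P x * Real.log (P x / Q x) ∧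
    ((∑ x, P x * Real.log (f x)) =
      Real.log (∑ x, Q x * f x) + ∑ x, P x * Real.log (P x / Q x) →
      ∀ x, Q x = P x * (∑ y, Q y * f y) * (f x)⁻¹) := by
  obtain ⟨x0, hx0⟩ : ∃ x, 0 < P x := by
    by_contra h
    push_neg at h
    have hz : ∀ x, P x = 0 := fun x => le_antisymm (h x) (hP x)
    simp [hz] at hP1
  set s : ℝ := ∑ y, Q y * f y with hs_def
  have hQx0 : 0 < Q x0 := (hQ0 x0).lt_of_ne fun h => by
    have := hPQ x0 h.symm; linarith
  have hs : 0 < s := by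
    refine Finset.sum_pos' (fun x _ => mul_nonneg (hQ0 x) (hf x))
      ⟨x0, Finset.mem_univ _, mul_pos hQx0 (hfpos x0 hx0)⟩
  -- pointwise bound: h x ≤ g x
  have hgh : ∀ x, P x - Q x * f x / s ≤ P x * Real.log (P x * s / (Q x * f x)) := by
    intro x
    rcases eq_or_lt_of_le (hP x) with hPx | hPx
    · simp [← hPx, hQP x hPx.symm]
    · have hQx : 0 < Q x := (hQ0 x).lt_of_ne fun h => by
        have := hPQ x h.symm; linarith
      have hfx : 0 < f x := hfpos x hPx
      have hu : 0 < Q x * f x / (P x * s) := by positivity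
      have hlog := Real.log_le_sub_one_of_pos hu
      have hinv : Real.log (P x * s / (Q x * f x)) =
          - Real.log (Q x * f x / (P x * s)) := by
        rw [← Real.log_inv, inv_div]
      have hpu : P x * (Q x * f x / (P x * s)) = Q x * f x / s := by
        field_simp
      nlinarith [mul_le_mul_of_nonneg_left hlog hPx.le]
  have hsum_h : ∑ x, (P x - Q x * f x / s) = 0 := by
    rw [Finset.sum_sub_distrib, hP1, ← Finset.sum_div, ← hs_def, div_self hs.ne']
    ring
  have hsum_A : ∑ x, P x * Real.log (P x * s / (Q x * f x)) =
      Real.log s + ∑ x, P x * Real.log (P x / Q x) - ∑ x, P x * Real.log (f x) := by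
    have hpt : ∀ x, P x * Real.log (P x * s / (Q x * f x)) =
        P x * Real.log s + P x * Real.log (P x / Q x) - P x * Real.log (f x) := by
      intro x
      rcases eq_or_lt_of_le (hP x) with hPx | hPx
      · simp [← hPx]
      · have hQx : 0 < Q x := (hQ0 x).lt_of_ne fun h => by
          have := hPQ x h.symm; linarith
        have hfx : 0 < f x := hfpos x hPx
        have h1 : Real.log (P x * s / (Q x * f x)) =
            Real.log (P x) + Real.log s - (Real.log (Q x) + Real.log (f x)) := by
          rw [Real.log_div (by positivity) (by positivity),
            Real.log_mul hPx.ne' hs.ne', Real.log_mul hQx.ne' hfx.ne']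
        have h2 : Real.log (P x / Q x) = Real.log (P x) - Real.log (Q x) :=
          Real.log_div hPx.ne' hQx.ne'
        rw [h1, h2]; ring
    rw [Finset.sum_congr rfl fun x _ => hpt x, Finset.sum_sub_distrib,
      Finset.sum_add_distrib, ← Finset.sum_mul, hP1, one_mul]
  have hmain : 0 ≤ Real.log s + ∑ x, P x * Real.log (P x / Q x) -
      ∑ x, P x * Real.log (f x) := by
    rw [← hsum_A]
    calc (0:ℝ) = ∑ x, (P x - Q x * f x / s) := hsum_h.symm
    _ ≤ _ := Finset.sum_le_sum fun x _ => hgh x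
  constructor
  · linarith
  · intro heq
    have hsum_g : ∑ x, P x * Real.log (P x * s / (Q x * f x)) =
        ∑ x, (P x - Q x * f x / s) := by rw [hsum_A, hsum_h]; linarith
    have hptEq := (Finset.sum_eq_sum_iff_of_le
      (fun x _ => hgh x)).mp hsum_g.symm
    intro x
    rcases eq_or_lt_of_le (hP x) with hPx | hPx
    · simp [← hPx, hQP x hPx.symm]
    · have hQx : 0 < Q x := (hQ0 x).lt_of_ne fun h => by
        have := hPQ x h.symm; linarith
      have hfx : 0 < f x := hfpos x hPx
      have hx := hptEq x (Finset.mem_univ x)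
      have hu : 0 < Q x * f x / (P x * s) := by positivity
      have hu1 : Q x * f x / (P x * s) = 1 := by
        by_contra hne
        have hlt := Real.log_lt_sub_one_of_pos hu hne
        have hinv : Real.log (P x * s / (Q x * f x)) =
            - Real.log (Q x * f x / (P x * s)) := by
          rw [← Real.log_inv, inv_div]
        have hpu : P x * (Q x * f x / (P x * s)) = Q x * f x / s := by
          field_simp
        nlinarith [mul_lt_mul_of_pos_left hlt hPx]
      have : Q x * f x = P x * s := by
        field_simp at hu1; linarith [hu1]
      field_simp
      linarith [this]

open Classical in
theorem donsker_varadhan_discrete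
    {𝒳 : Type} [Fintype 𝒳]
    (P : 𝒳 → ℝ) (hP : ∀ x, 0 ≤ P x) (hP1 : ∑ x, P x = 1)
    (f : 𝒳 → ℝ) (hf : ∀ x, 0 ≤ f x) (hfpos : ∀ x, 0 < P x → 0 < f x)
    (Qstar : 𝒳 → ℝ)
    (hQstar : ∀ x, Qstar x = (P x / f x) / (∑ x', P x' * (f x')⁻¹)) :
    -- the value `log E_Q f + D(P‖Q)` is lower bounded by `E_P log f` for every
    -- probability distribution `Q ≪ P` ...
    (∀ Q : 𝒳 → ℝ, (∀ x, 0 ≤ Q x) → (∑ x, Q x) = 1 → (∀ x, P x = 0 → Q x = 0) →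
      ((∑ x, P x * Real.log (f x) : ℝ) : EReal) ≤
        ((Real.log (∑ x, Q x * f x) : ℝ) : EReal) +
          (if ∀ x, Q x = 0 → P x = 0
            then (((∑ x, P x * Real.log (P x / Q x)) : ℝ) : EReal) else ⊤))
    -- ... `Q*` is a probability distribution with `Q* ≪ P` (and `P ≪ Q*`) ...
    ∧ ((∀ x, 0 ≤ Qstar x) ∧ (∑ x, Qstar x) = 1 ∧ (∀ x, P x = 0 → Qstar x = 0))
    -- ... the minimum is attained at `Q*` ...
    ∧ (∑ x, P x * Real.log (f x)) =
        Real.log (∑ x, Qstar x * f x) + ∑ x, P x * Real.log (P x / Qstar x)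
    -- ... and uniquely so: any `Q ≪ P` attaining the value `E_P log f` is `Q*`.
    ∧ (∀ Q : 𝒳 → ℝ, (∀ x, 0 ≤ Q x) → (∑ x, Q x) = 1 → (∀ x, P x = 0 → Q x = 0) →
        ((∑ x, P x * Real.log (f x) : ℝ) : EReal) =
          ((Real.log (∑ x, Q x * f x) : ℝ) : EReal) +
            (if ∀ x, Q x = 0 → P x = 0
              then (((∑ x, P x * Real.log (P x / Q x)) : ℝ) : EReal) else ⊤) →
        Q = Qstar) := by
  obtain ⟨x0, hx0⟩ : ∃ x, 0 < P x := by
    by_contra h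
    push_neg at h
    have hz : ∀ x, P x = 0 := fun x => le_antisymm (h x) (hP x)
    simp [hz] at hP1
  set S : ℝ := ∑ x', P x' * (f x')⁻¹ with hS_def
  have hS : 0 < S :=
    Finset.sum_pos' (fun x _ => mul_nonneg (hP x) (inv_nonneg.mpr (hf x)))
      ⟨x0, Finset.mem_univ _, mul_pos hx0 (inv_pos.mpr (hfpos x0 hx0))⟩
  have hfzero : ∀ x, f x = 0 → P x = 0 := by
    intro x hx
    by_contra hPx
    exact absurd hx (hfpos x ((hP x).lt_of_ne (Ne.symm hPx))).ne'
  -- Q* is a probability distribution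
  have hQs0 : ∀ x, 0 ≤ Qstar x := fun x => by
    rw [hQstar]
    exact div_nonneg (div_nonneg (hP x) (hf x)) hS.le
  have hQsP : ∀ x, P x = 0 → Qstar x = 0 := fun x hx => by
    rw [hQstar, hx]; simp
  have hQsPx : ∀ x, Qstar x = P x * (f x)⁻¹ / S := fun x => by
    rw [hQstar, div_eq_mul_inv (P x)]
  have hQs1 : ∑ x, Qstar x = 1 := by
    rw [Finset.sum_congr rfl fun x _ => hQsPx x, ← Finset.sum_div, ← hS_def,
      div_self hS.ne']
  have hPQs : ∀ x, Qstar x = 0 → P x = 0 := by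
    intro x hx
    by_contra hPx
    have hPx' : 0 < P x := (hP x).lt_of_ne (Ne.symm hPx)
    have hfx : 0 < f x := hfpos x hPx'
    have : 0 < Qstar x := by
      rw [hQstar]; exact div_pos (div_pos hPx' hfx) hS
    linarith
  -- value at Q*
  have hQsf : ∀ x, Qstar x * f x = P x / S := by
    intro x
    rcases eq_or_ne (f x) 0 with hfx | hfx
    · rw [hQsPx x, hfx, hfzero x hfx]; simp
    · rw [hQsPx x]; field_simp
  have hsumQsf : ∑ x, Qstar x * f x = S⁻¹ := by
    rw [Finset.sum_congr rfl fun x _ => hQsf x, ← Finset.sum_div, hP1,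
      one_div]
  have hDQs : ∑ x, P x * Real.log (P x / Qstar x) =
      ∑ x, P x * Real.log (f x) + Real.log S := by
    have hpt : ∀ x, P x * Real.log (P x / Qstar x) =
        P x * Real.log (f x) + P x * Real.log S := by
      intro x
      rcases eq_or_lt_of_le (hP x) with hPx | hPx
      · simp [← hPx]
      · have hfx : 0 < f x := hfpos x hPx
        have hq : P x / Qstar x = f x * S := by
          rw [hQsPx x]; field_simp
        rw [hq, Real.log_mul hfx.ne' hS.ne']; ring
    rw [Finset.sum_congr rfl fun x _ => hpt x, Finset.sum_add_distrib,
      ← Finset.sum_mul, hP1, one_mul]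
  have hattain : (∑ x, P x * Real.log (f x)) =
      Real.log (∑ x, Qstar x * f x) + ∑ x, P x * Real.log (P x / Qstar x) := by
    rw [hsumQsf, hDQs, Real.log_inv]; ring
  refine ⟨?_, ⟨hQs0, hQs1, hQsP⟩, hattain, ?_⟩
  · intro Q hQ0 hQ1 hQP
    by_cases hc : ∀ x, Q x = 0 → P x = 0
    · rw [if_pos hc, ← EReal.coe_add, EReal.coe_le_coe_iff]
      exact (dv_key P Q f hP hP1 hf hfpos hQ0 hQ1 hQP hc).1
    · rw [if_neg hc, EReal.coe_add_top]
      exact le_top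
  · intro Q hQ0 hQ1 hQP heq
    by_cases hc : ∀ x, Q x = 0 → P x = 0
    · rw [if_pos hc, ← EReal.coe_add, EReal.coe_eq_coe_iff] at heq
      have hform := (dv_key P Q f hP hP1 hf hfpos hQ0 hQ1 hQP hc).2 heq
      set s : ℝ := ∑ y, Q y * f y with hs_def
      have hsS : s * S = 1 := by
        have : ∑ x, Q x = ∑ x, s * (P x * (f x)⁻¹) := by
          refine Finset.sum_congr rfl fun x _ => ?_
          rw [hform x]; ring
        rw [hQ1, ← Finset.mul_sum, ← hS_def] at this
        linarith
      funext x
      rw [hform x, hQsPx x]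
      have hs0 : s = S⁻¹ := by
        field_simp
        linarith [hsS]
      rw [hs0]
      field_simp
    · rw [if_neg hc, EReal.coe_add_top] at heq
      exact absurd heq (EReal.coe_ne_top _)
end

section
/- Let X be a random variable on a finite alphabet 𝒳 with distribution P_X, let A ∼ P_A be a random function from 𝒳 to a finite alphabet 𝒴 drawn from a finite set 𝒜 independently of X, and set Y = A(X). Then I(X;Y) ≥ −H(A) − E_Y[ log E_{X,A}[ P(A | X, Y) ] ] − E_{X,A}[ log E_Y[ P(A | X, Y) / E_{X,A}[P(A | X, Y)] ] ], where P(a|x,y) is the conditional probability of the action given input x and output y under the joint law P(x,y,a) = P_X(x)P_A(a)𝟙(y=a(x)); in E_{X,A}[P(A|X,y)] the pair (X,A) is drawn from P_X × P_A independently with y fixed, in the outer E_Y the variable Y ∼ P_Y, and in the last term the outer expectation E_{X,A} is over P_X × P_A and the inner E_Y over P_Y independent of (X,A). -/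
/-!
Statement 5 (Theorem 3 of the paper): let `X ∼ pX` on a finite alphabet, let
`A ∼ pA` be a random function `𝒳 → 𝒴` independent of `X`, and `Y = A(X)`.
With the joint law `p₃ x y a = pX x * pA a * 𝟙(y = a x)`, the conditional
`P(a|x,y) = p₃ x y a / pJ x y` (Lean's `0/0 = 0` handles points outside the
support), and `D y = E_{X,A}[P(A|X,y)]` (fresh independent `(X,A) ∼ pX × pA`),
we have
`I(X;Y) ≥ -H(A) - E_Y log D(Y) - E_{X,A} log E_Y [ P(A|X,Y) / D(Y) ]`,
where in the last term the outer `(X,A) ∼ pX × pA` and the inner `Y ∼ pY` are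
independent.  Logarithms base 2.
-/

theorem mutual_information_general_action_lower_bound
    {𝒳 𝒴 : Type} [Fintype 𝒳] [Fintype 𝒴] [DecidableEq 𝒳] [DecidableEq 𝒴]
    (pX : 𝒳 → ℝ) (hpX : ∀ x, 0 ≤ pX x) (hpX1 : ∑ x, pX x = 1)
    (pA : (𝒳 → 𝒴) → ℝ) (hpA : ∀ a, 0 ≤ pA a) (hpA1 : ∑ a, pA a = 1)
    -- joint law of (X, Y, A)
    (p₃ : 𝒳 → 𝒴 → (𝒳 → 𝒴) → ℝ)
    (hp₃ : ∀ x y a, p₃ x y a = pX x * pA a * (if y = a x then (1 : ℝ) else 0))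
    -- joint law of (X, Y) and marginal of Y
    (pJ : 𝒳 → 𝒴 → ℝ) (hpJ : ∀ x y, pJ x y = ∑ a, p₃ x y a)
    (pY : 𝒴 → ℝ) (hpY : ∀ y, pY y = ∑ x, pJ x y)
    -- conditional law of the action given input and output
    (Pc : (𝒳 → 𝒴) → 𝒳 → 𝒴 → ℝ) (hPc : ∀ a x y, Pc a x y = p₃ x y a / pJ x y)
    -- D y = E_{X,A}[P(A|X,y)]
    (D : 𝒴 → ℝ) (hD : ∀ y, D y = ∑ x, ∑ a, pX x * pA a * Pc a x y) :
    (∑ x, ∑ y, pJ x y * Real.logb 2 (pJ x y / (pX x * pY y))) ≥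
      -(-(∑ a, pA a * Real.logb 2 (pA a)))
      - (∑ y, pY y * Real.logb 2 (D y))
      - (∑ x, ∑ a, pX x * pA a *
          Real.logb 2 (∑ y, pY y * (Pc a x y / D y))) := by
  classical
  have hp3nn : ∀ x y a, 0 ≤ p₃ x y a := by
    intro x y a; rw [hp₃]
    have : (0:ℝ) ≤ if y = a x then (1:ℝ) else 0 := by split <;> norm_num
    have h1 := mul_nonneg (hpX x) (hpA a)
    exact mul_nonneg h1 this
  have hp3zero : ∀ x y a, y ≠ a x → p₃ x y a = 0 := by
    intro x y a h; rw [hp₃, if_neg h, mul_zero]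
  have hp3diag : ∀ x a, p₃ x (a x) a = pX x * pA a := by
    intro x a; rw [hp₃, if_pos rfl, mul_one]
  have hpJnn : ∀ x y, 0 ≤ pJ x y := by
    intro x y; rw [hpJ]; exact Finset.sum_nonneg fun a _ => hp3nn x y a
  have hpYnn : ∀ y, 0 ≤ pY y := by
    intro y; rw [hpY]; exact Finset.sum_nonneg fun x _ => hpJnn x y
  have hPcnn : ∀ a x y, 0 ≤ Pc a x y := by
    intro a x y; rw [hPc]; exact div_nonneg (hp3nn x y a) (hpJnn x y)
  have hPczero : ∀ a x y, y ≠ a x → Pc a x y = 0 := by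
    intro a x y h; rw [hPc, hp3zero x y a h, zero_div]
  -- step 1 : LHS as a double sum over x, a
  have hL : (∑ x, ∑ y, pJ x y * Real.logb 2 (pJ x y / (pX x * pY y)))
      = ∑ x, ∑ a, pX x * pA a *
          Real.logb 2 (pJ x (a x) / (pX x * pY (a x))) := by
    refine Finset.sum_congr rfl fun x _ => ?_
    have : ∀ y, pJ x y * Real.logb 2 (pJ x y / (pX x * pY y))
        = ∑ a, p₃ x y a * Real.logb 2 (pJ x y / (pX x * pY y)) := by
      intro y; rw [hpJ, Finset.sum_mul]
    simp only [this]
    rw [Finset.sum_comm]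
    refine Finset.sum_congr rfl fun a _ => ?_
    rw [Finset.sum_eq_single (a x)]
    · rw [hp3diag]
    · intro y _ hy; rw [hp3zero x y a hy, zero_mul]
    · intro h; exact absurd (Finset.mem_univ _) h
  -- step 2 : entropy sum as double sum
  have hH : (∑ a, pA a * Real.logb 2 (pA a))
      = ∑ x, ∑ a, pX x * pA a * Real.logb 2 (pA a) := by
    have : ∀ x, (∑ a, pX x * pA a * Real.logb 2 (pA a))
        = pX x * ∑ a, pA a * Real.logb 2 (pA a) := by
      intro x; rw [Finset.mul_sum]; exact Finset.sum_congr rfl fun a _ => by ring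
    simp only [this, ← Finset.sum_mul, hpX1, one_mul]
  -- step 3 : E_Y log D as double sum
  have hYD : (∑ y, pY y * Real.logb 2 (D y))
      = ∑ x, ∑ a, pX x * pA a * Real.logb 2 (D (a x)) := by
    have h1 : ∀ y, pY y * Real.logb 2 (D y)
        = ∑ x, ∑ a, p₃ x y a * Real.logb 2 (D y) := by
      intro y
      rw [hpY]
      rw [Finset.sum_mul]
      refine Finset.sum_congr rfl fun x _ => ?_
      rw [hpJ, Finset.sum_mul]
    simp only [h1]
    rw [Finset.sum_comm]
    refine Finset.sum_congr rfl fun x _ => ?_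
    rw [Finset.sum_comm]
    refine Finset.sum_congr rfl fun a _ => ?_
    rw [Finset.sum_eq_single (a x)]
    · rw [hp3diag]
    · intro y _ hy; rw [hp3zero x y a hy, zero_mul]
    · intro h; exact absurd (Finset.mem_univ _) h
  -- step 4 : inner sum collapses
  have hInner : ∀ x a, (∑ y, pY y * (Pc a x y / D y))
      = pY (a x) * (Pc a x (a x) / D (a x)) := by
    intro x a
    rw [Finset.sum_eq_single (a x)]
    · intro y _ hy; rw [hPczero a x y hy, zero_div, mul_zero]
    · intro h; exact absurd (Finset.mem_univ _) h
  -- pointwise identity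
  have hKey : ∀ x a,
      pX x * pA a * Real.logb 2 (pJ x (a x) / (pX x * pY (a x)))
      = pX x * pA a * Real.logb 2 (pA a)
        - pX x * pA a * Real.logb 2 (D (a x))
        - pX x * pA a *
            Real.logb 2 (pY (a x) * (Pc a x (a x) / D (a x))) := by
    intro x a
    by_cases hx0 : pX x = 0
    · simp [hx0]
    by_cases ha0 : pA a = 0
    · simp [ha0]
    have hx : 0 < pX x := lt_of_le_of_ne (hpX x) (Ne.symm hx0)
    have ha : 0 < pA a := lt_of_le_of_ne (hpA a) (Ne.symm ha0)
    have hJpos : 0 < pJ x (a x) := by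
      have h1 : p₃ x (a x) a ≤ pJ x (a x) := by
        rw [hpJ]
        exact Finset.single_le_sum (fun a' _ => hp3nn x (a x) a') (Finset.mem_univ a)
      have h2 : 0 < p₃ x (a x) a := by rw [hp3diag]; positivity
      linarith
    have hYpos : 0 < pY (a x) := by
      have h1 : pJ x (a x) ≤ pY (a x) := by
        rw [hpY]
        exact Finset.single_le_sum (fun x' _ => hpJnn x' (a x)) (Finset.mem_univ x)
      linarith
    have hPceq : Pc a x (a x) = pX x * pA a / pJ x (a x) := by
      rw [hPc, hp3diag]
    have hPcpos : 0 < Pc a x (a x) := by rw [hPceq]; positivity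
    have hDpos : 0 < D (a x) := by
      have h1 : ∑ a', pX x * pA a' * Pc a' x (a x) ≤ D (a x) := by
        rw [hD]
        refine Finset.single_le_sum (f := fun x' => ∑ a', pX x' * pA a' * Pc a' x' (a x)) (fun x' _ => ?_) (Finset.mem_univ x)
        exact Finset.sum_nonneg fun a' _ =>
          mul_nonneg (mul_nonneg (hpX x') (hpA a')) (hPcnn a' x' (a x))
      have h2 : pX x * pA a * Pc a x (a x) ≤ ∑ a', pX x * pA a' * Pc a' x (a x) := by
        refine Finset.single_le_sum (f := fun a' => pX x * pA a' * Pc a' x (a x)) (fun a' _ => ?_) (Finset.mem_univ a)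
        exact mul_nonneg (mul_nonneg (hpX x) (hpA a')) (hPcnn a' x (a x))
      have h3 : 0 < pX x * pA a * Pc a x (a x) := by positivity
      linarith
    have hZpos : 0 < pY (a x) * (Pc a x (a x) / D (a x)) := by positivity
    have e : pJ x (a x) / (pX x * pY (a x))
        = pA a / D (a x) / (pY (a x) * (Pc a x (a x) / D (a x))) := by
      rw [hPceq]
      field_simp
    rw [e, Real.logb_div (by positivity) (ne_of_gt hZpos),
        Real.logb_div (ne_of_gt ha) (ne_of_gt hDpos)]
    ring
  rw [hL, neg_neg, hH, hYD]
  have h3 : (∑ x, ∑ a, pX x * pA a *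
        Real.logb 2 (∑ y, pY y * (Pc a x y / D y)))
      = ∑ x, ∑ a, pX x * pA a *
          Real.logb 2 (pY (a x) * (Pc a x (a x) / D (a x))) := by
    refine Finset.sum_congr rfl fun x _ => Finset.sum_congr rfl fun a _ => ?_
    rw [hInner]
  rw [h3]
  apply ge_of_eq
  rw [← Finset.sum_sub_distrib, ← Finset.sum_sub_distrib]
  refine Finset.sum_congr rfl fun x _ => ?_
  rw [← Finset.sum_sub_distrib, ← Finset.sum_sub_distrib]
  exact Finset.sum_congr rfl fun a _ => hKey x a
end

section
/- Let A be a uniform action on a finite set 𝒜 of functions 𝒳 → 𝒴, independent of X ∼ P_X, with Y = A(X). Then −E_{X,A}[ log E_Y[ P(A|X,Y) / E_{X,A}[P(A|X,Y)] ] ] ≥ −E_X[ log E_Y[ 𝟙(X∼Y) / E_X[𝟙(X∼Y)] ] ] ≥ 0, where in each term the outer expectation is over independent draws from the indicated marginals (P_X × Unif(𝒜) or P_X), the inner E_Y is over P_Y independently, and the innermost normalizing expectation E_{X,A} (resp. E_X) is over fresh independent draws with Y fixed. -/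
/-!
Statement 8 (Lemma 3 of the paper): let `A` be uniform on a finite set `𝒜` of
functions `𝒳 → 𝒴`, independent of `X ∼ pX`, with `Y = A(X)`; joint law
`p(x,y,a) = pX x * |𝒜|⁻¹ * 𝟙(y = a x)`, conditional `P(a|x,y) = p(x,y,a)/pJ x y`,
adjacency `x ∼ y ⟺ pJ x y > 0`.  Then
`-E_{X,A} log E_Y [P(A|X,Y) / E_{X,A}P(A|X,Y)]
   ≥ -E_X log E_Y [𝟙(X∼Y) / E_X 𝟙(X∼Y)] ≥ 0`,
where outer expectations are over `pX × Unif(𝒜)` (resp. `pX`), inner `E_Y` over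
`pY` independently, and the normalizing `E_{X,A}` (resp. `E_X`) is over fresh
independent draws with `Y` fixed.  Logarithms base 2.
-/

lemma jensen_logb' {ι : Type*} (t : Finset ι) (w f : ι → ℝ) (s : ℝ)
    (hw : ∀ i ∈ t, 0 ≤ w i) (hw1 : ∑ i ∈ t, w i = 1)
    (hf : ∀ i ∈ t, 0 < w i → 0 < f i) (hs : 0 < s)
    (hfs : ∑ i ∈ t, w i * f i ≤ s) :
    ∑ i ∈ t, w i * Real.logb 2 (f i) ≤ Real.logb 2 s := by
  have hlog2 : (0:ℝ) < Real.log 2 := Real.log_pos (by norm_num)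
  have key : ∀ i ∈ t, w i * Real.logb 2 (f i) ≤
      w i * Real.logb 2 s + (w i * f i / s - w i) / Real.log 2 := by
    intro i hi
    rcases (hw i hi).lt_or_eq with hwi | hwi
    · have hfi := hf i hi hwi
      have h1 : Real.log (f i / s) ≤ f i / s - 1 :=
        Real.log_le_sub_one_of_pos (div_pos hfi hs)
      rw [Real.log_div hfi.ne' hs.ne'] at h1
      have h2 : Real.logb 2 (f i) ≤ Real.logb 2 s + (f i / s - 1) / Real.log 2 := by
        rw [Real.logb, Real.logb, ← add_div]
        exact div_le_div_of_nonneg_right (by linarith) hlog2.le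
      calc w i * Real.logb 2 (f i)
          ≤ w i * (Real.logb 2 s + (f i / s - 1) / Real.log 2) :=
            mul_le_mul_of_nonneg_left h2 hwi.le
        _ = w i * Real.logb 2 s + (w i * f i / s - w i) / Real.log 2 := by
            field_simp
    · simp [← hwi]
  calc ∑ i ∈ t, w i * Real.logb 2 (f i)
      ≤ ∑ i ∈ t, (w i * Real.logb 2 s + (w i * f i / s - w i) / Real.log 2) :=
        Finset.sum_le_sum key
    _ = Real.logb 2 s + ((∑ i ∈ t, w i * f i) / s - 1) / Real.log 2 := by
        rw [Finset.sum_add_distrib, ← Finset.sum_mul, hw1, one_mul,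
          ← Finset.sum_div, Finset.sum_sub_distrib, ← Finset.sum_div, hw1]
    _ ≤ Real.logb 2 s := by
        have h3 : (∑ i ∈ t, w i * f i) / s ≤ 1 := (div_le_one hs).mpr hfs
        have : ((∑ i ∈ t, w i * f i) / s - 1) / Real.log 2 ≤ 0 :=
          div_nonpos_of_nonpos_of_nonneg (by linarith) hlog2.le
        linarith

theorem uniform_action_second_term
    {𝒳 𝒴 : Type} [Fintype 𝒳] [Fintype 𝒴] [DecidableEq 𝒳] [DecidableEq 𝒴]
    (pX : 𝒳 → ℝ) (hpX : ∀ x, 0 ≤ pX x) (hpX1 : ∑ x, pX x = 1)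
    (𝒜 : Finset (𝒳 → 𝒴)) (h𝒜 : 𝒜.Nonempty)
    (pJ : 𝒳 → 𝒴 → ℝ)
    (hpJ : ∀ x y, pJ x y =
      ∑ a ∈ 𝒜, pX x * ((𝒜.card : ℝ))⁻¹ * (if a x = y then (1 : ℝ) else 0))
    (pY : 𝒴 → ℝ) (hpY : ∀ y, pY y = ∑ x, pJ x y)
    (Pc : (𝒳 → 𝒴) → 𝒳 → 𝒴 → ℝ)
    (hPc : ∀ a x y, Pc a x y =
      (pX x * ((𝒜.card : ℝ))⁻¹ * (if a x = y then (1 : ℝ) else 0)) / pJ x y)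
    -- D y = E_{X,A}[P(A|X,y)]
    (D : 𝒴 → ℝ)
    (hD : ∀ y, D y = ∑ x, ∑ a ∈ 𝒜, pX x * ((𝒜.card : ℝ))⁻¹ * Pc a x y)
    -- E y = E_X 𝟙(X ∼ y)
    (E : 𝒴 → ℝ)
    (hE : ∀ y, E y = ∑ x, pX x * (if 0 < pJ x y then (1 : ℝ) else 0)) :
    -(∑ x, ∑ a ∈ 𝒜, pX x * ((𝒜.card : ℝ))⁻¹ *
        Real.logb 2 (∑ y, pY y * (Pc a x y / D y))) ≥
      -(∑ x, pX x *
          Real.logb 2 (∑ y, pY y * ((if 0 < pJ x y then (1 : ℝ) else 0) / E y)))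
    ∧ -(∑ x, pX x *
          Real.logb 2 (∑ y, pY y * ((if 0 < pJ x y then (1 : ℝ) else 0) / E y)))
        ≥ 0 := by
  set N : ℝ := ((𝒜.card : ℝ))⁻¹ with hNdef
  have hcard : (0:ℝ) < 𝒜.card := by exact_mod_cast Finset.card_pos.mpr h𝒜
  have hN : 0 < N := inv_pos.mpr hcard
  have hcardN : (𝒜.card : ℝ) * N = 1 := mul_inv_cancel₀ hcard.ne'
  -- basic nonnegativity
  have hpJnn : ∀ x y, 0 ≤ pJ x y := by
    intro x y; rw [hpJ]
    refine Finset.sum_nonneg fun a _ => ?_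
    refine mul_nonneg (mul_nonneg (hpX x) hN.le) ?_
    split <;> norm_num
  have hPcnn : ∀ a x y, 0 ≤ Pc a x y := by
    intro a x y; rw [hPc]
    refine div_nonneg (mul_nonneg (mul_nonneg (hpX x) hN.le) ?_) (hpJnn x y)
    split <;> norm_num
  have hpYnn : ∀ y, 0 ≤ pY y := by
    intro y; rw [hpY]; exact Finset.sum_nonneg fun x _ => hpJnn x y
  have hpJ_le_pY : ∀ x y, pJ x y ≤ pY y := by
    intro x y; rw [hpY]
    exact Finset.single_le_sum (fun x _ => hpJnn x y) (Finset.mem_univ x)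
  have hEnn : ∀ y, 0 ≤ E y := by
    intro y; rw [hE]
    refine Finset.sum_nonneg fun x _ => mul_nonneg (hpX x) ?_
    split <;> norm_num
  have hpXpos_of : ∀ x y, 0 < pJ x y → 0 < pX x := by
    intro x y h
    by_contra hc
    have hx0 : pX x = 0 := le_antisymm (not_lt.mp hc) (hpX x)
    rw [hpJ] at h; simp [hx0] at h
  have hEpos : ∀ x y, 0 < pJ x y → 0 < E y := by
    intro x y h
    have hx := hpXpos_of x y h
    have : pX x * (if 0 < pJ x y then (1:ℝ) else 0) ≤ E y := by
      rw [hE]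
      refine Finset.single_le_sum
        (f := fun x' => pX x' * (if 0 < pJ x' y then (1:ℝ) else 0))
        (fun x' _ => mul_nonneg (hpX x') (by split <;> norm_num)) (Finset.mem_univ x)
    rw [if_pos h, mul_one] at this
    exact lt_of_lt_of_le hx this
  -- ∑_a Pc a x y = indicator
  have hPcSum : ∀ x y, ∑ a ∈ 𝒜, Pc a x y = (if 0 < pJ x y then (1:ℝ) else 0) := by
    intro x y
    rcases (hpJnn x y).lt_or_eq with h | h
    · rw [if_pos h]
      simp only [hPc]
      rw [← Finset.sum_div, ← hpJ x y, div_self h.ne']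
    · rw [if_neg (by rw [← h]; exact lt_irrefl 0)]
      simp only [hPc, ← h, div_zero]
      exact Finset.sum_const_zero
  -- D y = N * E y
  have hDeq : ∀ y, D y = N * E y := by
    intro y
    rw [hD y, hE y, Finset.mul_sum]
    refine Finset.sum_congr rfl fun x _ => ?_
    have : ∑ a ∈ 𝒜, pX x * N * Pc a x y = pX x * N * ∑ a ∈ 𝒜, Pc a x y := by
      rw [Finset.mul_sum]
    rw [this, hPcSum x y]; ring
  -- positivity of pJ x (a x) when pX x > 0
  have hpJax : ∀ x (a : 𝒳 → 𝒴), a ∈ 𝒜 → 0 < pX x → 0 < pJ x (a x) := by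
    intro x a ha hx
    have h1 : pX x * N * (if a x = a x then (1:ℝ) else 0) ≤ pJ x (a x) := by
      rw [hpJ]
      exact Finset.single_le_sum
        (f := fun a' => pX x * N * (if a' x = a x then (1:ℝ) else 0))
        (fun a' _ => mul_nonneg (mul_nonneg (hpX x) hN.le) (by split <;> norm_num)) ha
    rw [if_pos rfl, mul_one] at h1
    exact lt_of_lt_of_le (mul_pos hx hN) h1
  -- S x > 0 when pX x > 0
  have hSpos : ∀ x, 0 < pX x →
      0 < ∑ y, pY y * ((if 0 < pJ x y then (1:ℝ) else 0) / E y) := by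
    intro x hx
    obtain ⟨a, ha⟩ := h𝒜
    have hpj := hpJax x a ha hx
    have hEp := hEpos x (a x) hpj
    have hpYp : 0 < pY (a x) := lt_of_lt_of_le hpj (hpJ_le_pY x (a x))
    have hterm : 0 < pY (a x) * ((if 0 < pJ x (a x) then (1:ℝ) else 0) / E (a x)) := by
      rw [if_pos hpj]
      exact mul_pos hpYp (div_pos one_pos hEp)
    refine lt_of_lt_of_le hterm (Finset.single_le_sum
      (f := fun y => pY y * ((if 0 < pJ x y then (1:ℝ) else 0) / E y))
      (fun y _ => mul_nonneg (hpYnn y)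
        (div_nonneg (by split <;> norm_num) (hEnn y))) (Finset.mem_univ (a x)))
  -- T a x > 0 when pX x > 0, a ∈ 𝒜
  have hTpos : ∀ x, 0 < pX x → ∀ a ∈ 𝒜, 0 < ∑ y, pY y * (Pc a x y / D y) := by
    intro x hx a ha
    have hpj := hpJax x a ha hx
    have hEp := hEpos x (a x) hpj
    have hpYp : 0 < pY (a x) := lt_of_lt_of_le hpj (hpJ_le_pY x (a x))
    have hPcp : 0 < Pc a x (a x) := by
      rw [hPc, if_pos rfl, mul_one]
      exact div_pos (mul_pos hx hN) hpj
    have hDp : 0 < D (a x) := by rw [hDeq]; exact mul_pos hN hEp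
    have hterm : 0 < pY (a x) * (Pc a x (a x) / D (a x)) :=
      mul_pos hpYp (div_pos hPcp hDp)
    refine lt_of_lt_of_le hterm (Finset.single_le_sum
      (f := fun y => pY y * (Pc a x y / D y))
      (fun y _ => mul_nonneg (hpYnn y) (div_nonneg (hPcnn a x y)
        (by rw [hDeq]; exact mul_nonneg hN.le (hEnn y)))) (Finset.mem_univ (a x)))
  -- mixture identity: ∑_a N * T a x = S x
  have hsumTS : ∀ x, ∑ a ∈ 𝒜, N * ∑ y, pY y * (Pc a x y / D y)
      = ∑ y, pY y * ((if 0 < pJ x y then (1:ℝ) else 0) / E y) := by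
    intro x
    simp only [Finset.mul_sum]
    rw [Finset.sum_comm]
    refine Finset.sum_congr rfl fun y _ => ?_
    have h1 : ∀ a, N * (pY y * (Pc a x y / D y)) = (N * pY y / D y) * Pc a x y := by
      intro a; ring
    simp only [h1]
    rw [← Finset.mul_sum, hPcSum x y, hDeq y]
    have h2 : N * pY y / (N * E y) = pY y / E y := mul_div_mul_left _ _ hN.ne'
    rw [h2]; ring
  -- ∑_y pY y = 1
  have hpY1 : ∑ y, pY y = 1 := by
    have h1 : ∀ x, ∑ y, pJ x y = pX x := by
      intro x
      simp only [hpJ]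
      rw [Finset.sum_comm]
      have h2 : ∀ a : 𝒳 → 𝒴, ∑ y, pX x * N * (if a x = y then (1:ℝ) else 0)
          = pX x * N := by
        intro a
        rw [← Finset.mul_sum, Finset.sum_ite_eq Finset.univ (a x) (fun _ => (1:ℝ))]
        simp
      rw [Finset.sum_congr rfl fun a _ => h2 a, Finset.sum_const, nsmul_eq_mul]
      rw [show (𝒜.card : ℝ) * (pX x * N) = pX x * ((𝒜.card : ℝ) * N) by ring, hcardN,
        mul_one]
    simp only [hpY]
    rw [Finset.sum_comm]
    rw [Finset.sum_congr rfl fun x _ => h1 x, hpX1]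
  -- ∑_x pX x * S x ≤ 1
  have hSsum : ∑ x, pX x * ∑ y, pY y * ((if 0 < pJ x y then (1:ℝ) else 0) / E y) ≤ 1 := by
    have h1 : ∀ x, pX x * ∑ y, pY y * ((if 0 < pJ x y then (1:ℝ) else 0) / E y)
        = ∑ y, (pY y / E y) * (pX x * (if 0 < pJ x y then (1:ℝ) else 0)) := by
      intro x
      rw [Finset.mul_sum]
      exact Finset.sum_congr rfl fun y _ => by ring
    rw [Finset.sum_congr rfl fun x _ => h1 x, Finset.sum_comm]
    have h2 : ∀ y, ∑ x, (pY y / E y) * (pX x * (if 0 < pJ x y then (1:ℝ) else 0))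
        ≤ pY y := by
      intro y
      rw [← Finset.mul_sum, ← hE y]
      rcases (hEnn y).lt_or_eq with hEy | hEy
      · rw [div_mul_eq_mul_div, mul_div_assoc, div_self hEy.ne', mul_one]
      · rw [← hEy, mul_zero]; exact hpYnn y
    calc ∑ y, ∑ x, (pY y / E y) * (pX x * (if 0 < pJ x y then (1:ℝ) else 0))
        ≤ ∑ y, pY y := Finset.sum_le_sum fun y _ => h2 y
      _ = 1 := hpY1
  -- per-x inequality (first inequality, termwise)
  have part1 : ∀ x, ∑ a ∈ 𝒜, pX x * N * Real.logb 2 (∑ y, pY y * (Pc a x y / D y))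
      ≤ pX x * Real.logb 2 (∑ y, pY y * ((if 0 < pJ x y then (1:ℝ) else 0) / E y)) := by
    intro x
    rcases (hpX x).lt_or_eq with hx | hx
    · have hJ := jensen_logb' 𝒜 (fun _ => N) (fun a => ∑ y, pY y * (Pc a x y / D y))
        (∑ y, pY y * ((if 0 < pJ x y then (1:ℝ) else 0) / E y))
        (fun _ _ => hN.le)
        (by rw [Finset.sum_const, nsmul_eq_mul, hcardN])
        (fun a ha _ => hTpos x hx a ha) (hSpos x hx) (le_of_eq (hsumTS x))
      have h3 : ∑ a ∈ 𝒜, pX x * N * Real.logb 2 (∑ y, pY y * (Pc a x y / D y))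
          = pX x * ∑ a ∈ 𝒜, N * Real.logb 2 (∑ y, pY y * (Pc a x y / D y)) := by
        rw [Finset.mul_sum]
        exact Finset.sum_congr rfl fun a _ => by ring
      rw [h3]
      exact mul_le_mul_of_nonneg_left hJ hx.le
    · simp [← hx]
  -- second inequality
  have part2 : ∑ x, pX x * Real.logb 2
      (∑ y, pY y * ((if 0 < pJ x y then (1:ℝ) else 0) / E y)) ≤ 0 := by
    have hJ := jensen_logb' Finset.univ pX
      (fun x => ∑ y, pY y * ((if 0 < pJ x y then (1:ℝ) else 0) / E y)) 1
      (fun x _ => hpX x) hpX1 (fun x _ hx => hSpos x hx) one_pos hSsum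
    simpa using hJ
  constructor
  · exact neg_le_neg (Finset.sum_le_sum fun x _ => part1 x)
  · exact neg_nonneg.mpr part2
end

section
/- Suppose the channel P_{Y|X} from finite alphabet 𝒳 to finite alphabet 𝒴 can be represented by a uniform action, i.e., there is a finite set 𝒜 of functions 𝒳→𝒴 such that for all x,y: P_{Y|X}(y|x) = |{a∈𝒜 : a(x)=y}|/|𝒜|. Then for any input distribution P_X, with Y the channel output, I(X;Y) ≥ −E_Y[log E_X[𝟙(X∼Y)]] − E_X[log E_Y[𝟙(X∼Y)/E_X[𝟙(X∼Y)]]], expectations taken over independent draws from the marginals P_X and P_Y as indicated. -/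
/-!
Statement 9 (Lemma 4 of the paper): if the channel `W = P_{Y|X}` from a finite
alphabet `𝒳` to a finite alphabet `𝒴` can be represented by a uniform action
(a finite nonempty set `𝒜` of functions with `W x y = |{a ∈ 𝒜 : a x = y}|/|𝒜|`),
then for any input distribution `pX`, with joint law `pJ x y = pX x * W x y`,
adjacency `x ∼ y ⟺ pJ x y > 0`, and marginals `pX`, `pY`:
`I(X;Y) ≥ -E_Y log E_X 𝟙(X∼Y) - E_X log E_Y [𝟙(X∼Y)/E_X 𝟙(X∼Y)]`.
Logarithms base 2, `0·log 0 = 0`.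
-/


private lemma logb_ge_aux (t : ℝ) (ht : 0 < t) :
    (1 - 1 / t) / Real.log 2 ≤ Real.logb 2 t := by
  have h2 : (0:ℝ) < Real.log 2 := Real.log_pos one_lt_two
  rw [Real.logb]
  have h1 : 1 - 1 / t ≤ Real.log t := by
    have := Real.log_le_sub_one_of_pos (inv_pos.mpr ht)
    rw [Real.log_inv] at this
    rw [one_div]
    linarith
  gcongr

private lemma aux_bound {𝒳 𝒴 : Type} [Fintype 𝒳] [Fintype 𝒴]
    (pX : 𝒳 → ℝ) (pY : 𝒴 → ℝ) (pJ : 𝒳 → 𝒴 → ℝ)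
    (q : 𝒴 → ℝ) (r : 𝒳 → ℝ)
    (hpJ0 : ∀ x y, 0 ≤ pJ x y)
    (hrow : ∀ x, pX x = ∑ y, pJ x y)
    (hpY : ∀ y, pY y = ∑ x, pJ x y)
    (hpX1 : ∑ x, pX x = 1)
    (hxpos : ∀ x, 0 < pX x → ∃ y, 0 < pJ x y)
    (hqd : ∀ y, q y = ∑ x, pX x * (if 0 < pJ x y then (1:ℝ) else 0))
    (hrd : ∀ x, r x = ∑ y, pY y * ((if 0 < pJ x y then (1:ℝ) else 0) / q y)) :
    (∑ x, ∑ y, pJ x y * Real.logb 2 (pJ x y / (pX x * pY y))) ≥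
      -(∑ y, pY y * Real.logb 2 (q y)) - (∑ x, pX x * Real.logb 2 (r x)) := by
  have hpX0 : ∀ x, 0 ≤ pX x := fun x => (hrow x) ▸ Finset.sum_nonneg fun y _ => hpJ0 x y
  have hpY0 : ∀ y, 0 ≤ pY y := fun y => (hpY y) ▸ Finset.sum_nonneg fun x _ => hpJ0 x y
  have hq0 : ∀ y, 0 ≤ q y := fun y => (hqd y) ▸ Finset.sum_nonneg fun x _ =>
    mul_nonneg (hpX0 x) (by split <;> norm_num)
  have hr0 : ∀ x, 0 ≤ r x := fun x => (hrd x) ▸ Finset.sum_nonneg fun y _ =>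
    mul_nonneg (hpY0 y) (div_nonneg (by split <;> norm_num) (hq0 y))
  have hsupp : ∀ x y, 0 < pJ x y → 0 < pX x ∧ 0 < pY y ∧ 0 < q y ∧ 0 < r x := by
    intro x y h
    have hx : 0 < pX x := by
      rw [hrow x]
      exact lt_of_lt_of_le h (Finset.single_le_sum (fun y' _ => hpJ0 x y') (Finset.mem_univ y))
    have hy : 0 < pY y := by
      rw [hpY y]
      exact lt_of_lt_of_le h (Finset.single_le_sum (fun x' _ => hpJ0 x' y) (Finset.mem_univ x))
    have hqy : 0 < q y := by
      rw [hqd y]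
      have hle := Finset.single_le_sum
        (f := fun x' => pX x' * (if 0 < pJ x' y then (1:ℝ) else 0))
        (fun x' _ => mul_nonneg (hpX0 x') (by split <;> norm_num)) (Finset.mem_univ x)
      simp only [if_pos h, mul_one] at hle
      exact lt_of_lt_of_le hx hle
    have hrx : 0 < r x := by
      rw [hrd x]
      have hle := Finset.single_le_sum
        (f := fun y' => pY y' * ((if 0 < pJ x y' then (1:ℝ) else 0) / q y'))
        (fun y' _ => mul_nonneg (hpY0 y') (div_nonneg (by split <;> norm_num) (hq0 y')))
        (Finset.mem_univ y)
      simp only [if_pos h] at hle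
      have hpos : (0:ℝ) < pY y * (1 / q y) := by positivity
      exact lt_of_lt_of_le hpos hle
    exact ⟨hx, hy, hqy, hrx⟩
  have hrpos : ∀ x, 0 < pX x → 0 < r x := fun x hx => by
    obtain ⟨y, hy⟩ := hxpos x hx
    exact (hsupp x y hy).2.2.2
  set b : 𝒳 → 𝒴 → ℝ := fun x y =>
    (pX x / r x) * (pY y * ((if 0 < pJ x y then (1:ℝ) else 0) / q y)) with hbdef
  have key : ∀ x y, (pJ x y - b x y) / Real.log 2 ≤
      pJ x y * (Real.logb 2 (pJ x y / (pX x * pY y)) + Real.logb 2 (q y) + Real.logb 2 (r x)) := by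
    intro x y
    by_cases h : 0 < pJ x y
    · obtain ⟨hx, hy, hqy, hrx⟩ := hsupp x y h
      have hb : b x y = pX x * pY y / (q y * r x) := by
        simp only [hbdef, if_pos h]
        field_simp
      have hcomb : Real.logb 2 (pJ x y / (pX x * pY y)) + Real.logb 2 (q y) + Real.logb 2 (r x)
          = Real.logb 2 (pJ x y * q y * r x / (pX x * pY y)) := by
        rw [← Real.logb_mul (by positivity) (by positivity),
            ← Real.logb_mul (by positivity) (by positivity)]
        congr 1
        field_simp
      have ht : 0 < pJ x y * q y * r x / (pX x * pY y) := by positivity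
      have hlog := logb_ge_aux _ ht
      have h2 : (0:ℝ) < Real.log 2 := Real.log_pos one_lt_two
      have heq : pJ x y * ((1 - 1 / (pJ x y * q y * r x / (pX x * pY y))) / Real.log 2)
          = (pJ x y - b x y) / Real.log 2 := by
        rw [hb]
        field_simp
      calc (pJ x y - b x y) / Real.log 2
          = pJ x y * ((1 - 1 / (pJ x y * q y * r x / (pX x * pY y))) / Real.log 2) := heq.symm
        _ ≤ pJ x y * Real.logb 2 (pJ x y * q y * r x / (pX x * pY y)) := by
            exact mul_le_mul_of_nonneg_left hlog h.le
        _ = _ := by rw [hcomb]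
    · have h0 : pJ x y = 0 := le_antisymm (not_lt.mp h) (hpJ0 x y)
      have hb0 : b x y = 0 := by simp [hbdef, if_neg h]
      simp [h0, hb0]
  have hbsum : ∀ x, ∑ y, b x y = pX x := by
    intro x
    have h1 : ∑ y, b x y
        = (pX x / r x) * ∑ y, pY y * ((if 0 < pJ x y then (1:ℝ) else 0) / q y) := by
      rw [Finset.mul_sum]
    rw [h1, ← hrd x]
    by_cases hrx : r x = 0
    · have hx0 : pX x = 0 := by
        by_contra hc
        have := hrpos x (lt_of_le_of_ne (hpX0 x) (Ne.symm hc))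
        rw [hrx] at this
        exact lt_irrefl 0 this
      simp [hrx, hx0]
    · field_simp
  have hJtot : ∑ x, ∑ y, pJ x y = 1 := by
    rw [← hpX1]
    exact Finset.sum_congr rfl fun x _ => (hrow x).symm
  have hbtot : ∑ x, ∑ y, b x y = 1 := by
    rw [← hpX1]
    exact Finset.sum_congr rfl fun x _ => hbsum x
  have hsum : 0 ≤ ∑ x, ∑ y, pJ x y *
      (Real.logb 2 (pJ x y / (pX x * pY y)) + Real.logb 2 (q y) + Real.logb 2 (r x)) := by
    have hle : ∑ x, ∑ y, (pJ x y - b x y) / Real.log 2 ≤ ∑ x, ∑ y, pJ x y *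
        (Real.logb 2 (pJ x y / (pX x * pY y)) + Real.logb 2 (q y) + Real.logb 2 (r x)) :=
      Finset.sum_le_sum fun x _ => Finset.sum_le_sum fun y _ => key x y
    have heq0 : ∑ x, ∑ y, (pJ x y - b x y) / Real.log 2 = 0 := by
      simp_rw [← Finset.sum_div, Finset.sum_sub_distrib]
      rw [hJtot, hbtot]
      simp
    linarith
  have hA : ∑ y, pY y * Real.logb 2 (q y) = ∑ x, ∑ y, pJ x y * Real.logb 2 (q y) := by
    rw [Finset.sum_comm]
    exact Finset.sum_congr rfl fun y _ => by rw [hpY y, Finset.sum_mul]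
  have hB : ∑ x, pX x * Real.logb 2 (r x) = ∑ x, ∑ y, pJ x y * Real.logb 2 (r x) :=
    Finset.sum_congr rfl fun x _ => by rw [hrow x, Finset.sum_mul]
  have hsplit : ∑ x, ∑ y, pJ x y *
      (Real.logb 2 (pJ x y / (pX x * pY y)) + Real.logb 2 (q y) + Real.logb 2 (r x))
      = (∑ x, ∑ y, pJ x y * Real.logb 2 (pJ x y / (pX x * pY y)))
        + (∑ x, ∑ y, pJ x y * Real.logb 2 (q y))
        + (∑ x, ∑ y, pJ x y * Real.logb 2 (r x)) := by
    simp only [mul_add, Finset.sum_add_distrib]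
  rw [ge_iff_le, hA, hB]
  linarith [hsum, hsplit ▸ hsum]


theorem uniform_action_adjacency_lower_bound
    {𝒳 𝒴 : Type} [Fintype 𝒳] [Fintype 𝒴] [DecidableEq 𝒳] [DecidableEq 𝒴]
    (W : 𝒳 → 𝒴 → ℝ)
    (hrep : ∃ 𝒜 : Finset (𝒳 → 𝒴), 𝒜.Nonempty ∧
      ∀ x y, W x y = ((𝒜.filter (fun a => a x = y)).card : ℝ) / (𝒜.card : ℝ))
    (pX : 𝒳 → ℝ) (hpX : ∀ x, 0 ≤ pX x) (hpX1 : ∑ x, pX x = 1)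
    (pJ : 𝒳 → 𝒴 → ℝ) (hpJ : ∀ x y, pJ x y = pX x * W x y)
    (pY : 𝒴 → ℝ) (hpY : ∀ y, pY y = ∑ x, pJ x y) :
    (∑ x, ∑ y, pJ x y * Real.logb 2 (pJ x y / (pX x * pY y))) ≥
      -(∑ y, pY y *
          Real.logb 2 (∑ x, pX x * (if 0 < pJ x y then (1 : ℝ) else 0)))
      - (∑ x, pX x *
          Real.logb 2 (∑ y, pY y *
            ((if 0 < pJ x y then (1 : ℝ) else 0) /
              (∑ x', pX x' * (if 0 < pJ x' y then (1 : ℝ) else 0))))) := by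
  obtain ⟨𝒜, h𝒜ne, h𝒜⟩ := hrep
  have hcard : (0:ℝ) < (𝒜.card : ℝ) := by
    exact_mod_cast Finset.card_pos.mpr h𝒜ne
  have hW0 : ∀ x y, 0 ≤ W x y := fun x y => by rw [h𝒜]; positivity
  have hWsum : ∀ x, ∑ y, W x y = 1 := by
    intro x
    have hc : 𝒜.card = ∑ y, (𝒜.filter (fun a => a x = y)).card :=
      Finset.card_eq_sum_card_fiberwise (f := fun a : 𝒳 → 𝒴 => a x) (fun a _ => Finset.mem_univ _)
    simp only [h𝒜]
    rw [← Finset.sum_div, ← Nat.cast_sum, ← hc, div_self (ne_of_gt hcard)]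
  have hWpos : ∀ x, ∃ y, 0 < W x y := by
    intro x
    obtain ⟨a, ha⟩ := h𝒜ne
    refine ⟨a x, ?_⟩
    rw [h𝒜]
    apply div_pos _ hcard
    have hmem : a ∈ 𝒜.filter (fun b => b x = a x) := Finset.mem_filter.mpr ⟨ha, rfl⟩
    exact_mod_cast Finset.card_pos.mpr ⟨a, hmem⟩
  have hpJ0 : ∀ x y, 0 ≤ pJ x y := fun x y => by
    rw [hpJ]; exact mul_nonneg (hpX x) (hW0 x y)
  have hrow : ∀ x, pX x = ∑ y, pJ x y := by
    intro x
    simp only [hpJ]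
    rw [← Finset.mul_sum, hWsum, mul_one]
  have hxpos : ∀ x, 0 < pX x → ∃ y, 0 < pJ x y := by
    intro x hx
    obtain ⟨y, hy⟩ := hWpos x
    exact ⟨y, by rw [hpJ]; exact mul_pos hx hy⟩
  exact aux_bound pX pY pJ
    (fun y => ∑ x, pX x * (if 0 < pJ x y then (1:ℝ) else 0))
    (fun x => ∑ y, pY y * ((if 0 < pJ x y then (1:ℝ) else 0) /
      (∑ x', pX x' * (if 0 < pJ x' y then (1:ℝ) else 0))))
    hpJ0 hrow hpY hpX1 hxpos (fun _ => rfl) (fun _ => rfl)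
end

section
/- Let (X,Y) be jointly distributed random variables on finite alphabets with joint distribution P_{XY}, marginals P_X, P_Y, and adjacency x∼y iff P_{XY}(x,y)>0. Define functions on 𝒳 and 𝒴 recursively by: T_X^{(0)}(x) = 1 for all x; T_Y^{(k)}(y) = E_X[ 𝟙(X∼y) / T_X^{(k)}(X) ]; and T_X^{(k+1)}(x) = E_Y[ 𝟙(x∼Y) / T_Y^{(k)}(Y) ], with X ∼ P_X and Y ∼ P_Y. Then for every k ≥ 0: I(X;Y) ≥ −E_X[log T_X^{(k+1)}(X)] − E_Y[log T_Y^{(k)}(Y)] ≥ −E_X[log T_X^{(k)}(X)] − E_Y[log T_Y^{(k)}(Y)]. -/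
/-!
Statement 11 (Theorem 4 of the paper): for jointly distributed `(X,Y)` on
finite alphabets with joint law `p`, marginals `pX x = ∑ y, p x y`,
`pY y = ∑ x, p x y`, and adjacency `x ∼ y ⟺ p x y > 0`, define recursively
`T_X^{(0)} ≡ 1`, `T_Y^{(k)}(y) = E_X[𝟙(X∼y)/T_X^{(k)}(X)]`,
`T_X^{(k+1)}(x) = E_Y[𝟙(x∼Y)/T_Y^{(k)}(Y)]`.  Then for every `k ≥ 0`,
`I(X;Y) ≥ -E_X log T_X^{(k+1)}(X) - E_Y log T_Y^{(k)}(Y)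
        ≥ -E_X log T_X^{(k)}(X) - E_Y log T_Y^{(k)}(Y)`.
Logarithms base 2 (a fixed base, used throughout), `0·log 0 = 0`.
-/

/-- `T_X^{(k)}`, with `T_Y^{(k)}` inlined. -/
noncomputable def TXiter {𝒳 𝒴 : Type} [Fintype 𝒳] [Fintype 𝒴]
    (p : 𝒳 → 𝒴 → ℝ) : ℕ → 𝒳 → ℝ
  | 0 => fun _ => 1
  | (k + 1) => fun x => ∑ y, (∑ x', p x' y) *
      ((if 0 < p x y then (1 : ℝ) else 0) /
        (∑ x', (∑ y', p x' y') *
          ((if 0 < p x' y then (1 : ℝ) else 0) / TXiter p k x')))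

/-- `T_Y^{(k)}(y) = E_X[𝟙(X∼y)/T_X^{(k)}(X)]`. -/
noncomputable def TYiter {𝒳 𝒴 : Type} [Fintype 𝒳] [Fintype 𝒴]
    (p : 𝒳 → 𝒴 → ℝ) (k : ℕ) (y : 𝒴) : ℝ :=
  ∑ x, (∑ y', p x y') * ((if 0 < p x y then (1 : ℝ) else 0) / TXiter p k x)

section Aux
variable {𝒳 𝒴 : Type} [Fintype 𝒳] [Fintype 𝒴] (p : 𝒳 → 𝒴 → ℝ)

lemma TXiter_succ (k : ℕ) (x : 𝒳) :
    TXiter p (k+1) x = ∑ y, (∑ x', p x' y) *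
      ((if 0 < p x y then (1:ℝ) else 0) / TYiter p k y) := rfl

lemma pX_pos (hp : ∀ x y, 0 ≤ p x y) {x y} (h : 0 < p x y) : 0 < ∑ y', p x y' :=
  lt_of_lt_of_le h (Finset.single_le_sum (fun y' _ => hp x y') (Finset.mem_univ y))

lemma pY_pos (hp : ∀ x y, 0 ≤ p x y) {x y} (h : 0 < p x y) : 0 < ∑ x', p x' y :=
  lt_of_lt_of_le h (Finset.single_le_sum (fun x' _ => hp x' y) (Finset.mem_univ x))

lemma TY_pos_of (hp : ∀ x y, 0 ≤ p x y) (k : ℕ) (hTX : ∀ x, 0 < ∑ y', p x y' → 0 < TXiter p k x)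
    (y : 𝒴) (hy : 0 < ∑ x', p x' y) : 0 < TYiter p k y := by
  obtain ⟨x0, -, hx0⟩ := Finset.exists_lt_of_sum_lt
    (show ∑ x' : 𝒳, (0:ℝ) < ∑ x', p x' y by simpa using hy)
  refine Finset.sum_pos' (fun x _ => ?_) ⟨x0, Finset.mem_univ x0, ?_⟩
  · by_cases hpx : 0 < p x y
    · exact mul_nonneg (Finset.sum_nonneg fun y' _ => hp x y')
        (by simp only [if_pos hpx]; exact div_nonneg zero_le_one (hTX x (pX_pos p hp hpx)).le)
    · simp [hpx]
  · have h1 := pX_pos p hp hx0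
    have h2 := hTX x0 h1
    simp only [if_pos hx0]
    positivity

lemma TX_pos (hp : ∀ x y, 0 ≤ p x y) (k : ℕ) : ∀ (x : 𝒳), 0 < ∑ y', p x y' → 0 < TXiter p k x := by
  induction k with
  | zero => intro x _; simp [TXiter]
  | succ k ih =>
    intro x hx
    rw [TXiter_succ]
    obtain ⟨y0, -, hy0⟩ := Finset.exists_lt_of_sum_lt
      (show ∑ y : 𝒴, (0:ℝ) < ∑ y, p x y by simpa using hx)
    refine Finset.sum_pos' (fun y _ => ?_) ⟨y0, Finset.mem_univ y0, ?_⟩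
    · by_cases hpy : 0 < p x y
      · exact mul_nonneg (Finset.sum_nonneg fun x' _ => hp x' y)
          (by simp only [if_pos hpy]; exact div_nonneg zero_le_one (TY_pos_of p hp k ih y (pY_pos p hp hpy)).le)
      · simp [hpy]
    · have h1 := pY_pos p hp hy0
      have h2 := TY_pos_of p hp k ih y0 h1
      simp only [if_pos hy0]
      positivity

lemma TY_pos (hp : ∀ x y, 0 ≤ p x y) (k : ℕ) (y : 𝒴) (hy : 0 < ∑ x', p x' y) : 0 < TYiter p k y :=
  TY_pos_of p hp k (TX_pos p hp k) y hy

end Aux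

section Aux2
variable {𝒳 𝒴 : Type} [Fintype 𝒳] [Fintype 𝒴] (p : 𝒳 → 𝒴 → ℝ)

lemma sumA (hp : ∀ x y, 0 ≤ p x y) (hsum : ∑ x, ∑ y, p x y = 1) (k : ℕ) :
    ∑ x, (∑ y', p x y') * (TXiter p (k+1) x / TXiter p k x) = 1 := by
  have h1 : ∀ x : 𝒳, (∑ y', p x y') * (TXiter p (k+1) x / TXiter p k x)
      = ∑ y, ((∑ x', p x' y) / TYiter p k y) *
          ((∑ y', p x y') * ((if 0 < p x y then (1:ℝ) else 0) / TXiter p k x)) := by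
    intro x
    rw [TXiter_succ, Finset.sum_div, Finset.mul_sum]
    exact Finset.sum_congr rfl fun y _ => by ring
  rw [Finset.sum_congr rfl fun x _ => h1 x, Finset.sum_comm]
  have h2 : ∀ y : 𝒴, (∑ x, ((∑ x', p x' y) / TYiter p k y) *
      ((∑ y', p x y') * ((if 0 < p x y then (1:ℝ) else 0) / TXiter p k x)))
      = (∑ x', p x' y) := by
    intro y
    rw [← Finset.mul_sum]
    have hTY : (∑ x, (∑ y', p x y') * ((if 0 < p x y then (1:ℝ) else 0) / TXiter p k x))
        = TYiter p k y := rfl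
    rw [hTY]
    rcases eq_or_lt_of_le (Finset.sum_nonneg fun x _ => hp x y) with h | h
    · rw [← h]; simp
    · rw [div_mul_cancel₀ _ (TY_pos p hp k y h).ne']
  rw [Finset.sum_congr rfl fun y _ => h2 y, ← hsum, Finset.sum_comm]

lemma sumB (hp : ∀ x y, 0 ≤ p x y) (hsum : ∑ x, ∑ y, p x y = 1) (k : ℕ) :
    ∑ x, ∑ y, (∑ y', p x y') * (∑ x', p x' y) *
      ((if 0 < p x y then (1:ℝ) else 0) / (TXiter p (k+1) x * TYiter p k y)) = 1 := by
  have h1 : ∀ x : 𝒳, (∑ y, (∑ y', p x y') * (∑ x', p x' y) *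
      ((if 0 < p x y then (1:ℝ) else 0) / (TXiter p (k+1) x * TYiter p k y)))
      = ((∑ y', p x y') / TXiter p (k+1) x) * TXiter p (k+1) x := by
    intro x
    nth_rewrite 3 [TXiter_succ p k x]
    conv_rhs => rw [Finset.mul_sum]
    exact Finset.sum_congr rfl fun y _ => by ring
  rw [Finset.sum_congr rfl fun x _ => h1 x]
  have h2 : ∀ x : 𝒳, ((∑ y', p x y') / TXiter p (k+1) x) * TXiter p (k+1) x
      = (∑ y', p x y') := by
    intro x
    rcases eq_or_lt_of_le (Finset.sum_nonneg fun y _ => hp x y) with h | h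
    · rw [← h]; simp
    · rw [div_mul_cancel₀ _ (TX_pos p hp (k+1) x h).ne']
  rw [Finset.sum_congr rfl fun x _ => h2 x, ← hsum]

end Aux2

theorem convex_optimization_lower_bounds
    {𝒳 𝒴 : Type} [Fintype 𝒳] [Fintype 𝒴]
    (p : 𝒳 → 𝒴 → ℝ)
    (hp : ∀ x y, 0 ≤ p x y)
    (hsum : ∑ x, ∑ y, p x y = 1) :
    ∀ k : ℕ,
      (∑ x, ∑ y, p x y * Real.logb 2 (p x y / ((∑ y', p x y') * (∑ x', p x' y)))) ≥
        -(∑ x, (∑ y', p x y') * Real.logb 2 (TXiter p (k + 1) x))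
        - (∑ y, (∑ x', p x' y) * Real.logb 2 (TYiter p k y))
      ∧
      -(∑ x, (∑ y', p x y') * Real.logb 2 (TXiter p (k + 1) x))
        - (∑ y, (∑ x', p x' y) * Real.logb 2 (TYiter p k y)) ≥
      -(∑ x, (∑ y', p x y') * Real.logb 2 (TXiter p k x))
        - (∑ y, (∑ x', p x' y) * Real.logb 2 (TYiter p k y)) := by
  intro k
  have hL : (0:ℝ) < Real.log 2 := Real.log_pos (by norm_num)
  -- ===================== Part 2 =====================
  have part2 : ∑ x, (∑ y', p x y') * Real.logb 2 (TXiter p (k+1) x)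
      ≤ ∑ x, (∑ y', p x y') * Real.logb 2 (TXiter p k x) := by
    have step : ∀ x : 𝒳, (∑ y', p x y') * Real.logb 2 (TXiter p (k+1) x)
        - (∑ y', p x y') * Real.logb 2 (TXiter p k x)
        ≤ ((∑ y', p x y') * (TXiter p (k+1) x / TXiter p k x) - (∑ y', p x y'))
            / Real.log 2 := by
      intro x
      rcases eq_or_lt_of_le (Finset.sum_nonneg fun y _ => hp x y) with h | h
      · rw [← h]; simp
      · have h1 := TX_pos p hp (k+1) x h
        have h0 := TX_pos p hp k x h
        have hlog : Real.log (TXiter p (k+1) x / TXiter p k x)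
            ≤ TXiter p (k+1) x / TXiter p k x - 1 :=
          Real.log_le_sub_one_of_pos (div_pos h1 h0)
        rw [Real.log_div h1.ne' h0.ne'] at hlog
        have h2 : (∑ y', p x y') * (Real.log (TXiter p (k+1) x) - Real.log (TXiter p k x))
            ≤ (∑ y', p x y') * (TXiter p (k+1) x / TXiter p k x - 1) :=
          mul_le_mul_of_nonneg_left hlog h.le
        have e1 : (∑ y', p x y') * Real.logb 2 (TXiter p (k+1) x)
            - (∑ y', p x y') * Real.logb 2 (TXiter p k x)
            = ((∑ y', p x y') * (Real.log (TXiter p (k+1) x)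
                - Real.log (TXiter p k x))) / Real.log 2 := by
          simp only [Real.logb]; ring
        have e2 : ((∑ y', p x y') * (TXiter p (k+1) x / TXiter p k x) - (∑ y', p x y'))
            / Real.log 2
            = ((∑ y', p x y') * (TXiter p (k+1) x / TXiter p k x - 1)) / Real.log 2 := by
          ring
        rw [e1, e2]
        exact div_le_div_of_nonneg_right h2 hL.le
    have hsum' := Finset.sum_le_sum (fun x (_ : x ∈ Finset.univ) => step x)
    rw [Finset.sum_sub_distrib] at hsum'
    have hz : ∑ x, (((∑ y', p x y') * (TXiter p (k+1) x / TXiter p k x) - (∑ y', p x y'))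
        / Real.log 2) = 0 := by
      rw [← Finset.sum_div, Finset.sum_sub_distrib, sumA p hp hsum k, hsum]
      simp
    linarith
  -- ===================== Part 1 =====================
  have step1 : ∀ x : 𝒳, ∀ y : 𝒴,
      (p x y - (∑ y', p x y') * (∑ x', p x' y) *
        ((if 0 < p x y then (1:ℝ) else 0) / (TXiter p (k+1) x * TYiter p k y)))
        / Real.log 2
      ≤ p x y * Real.logb 2 (p x y / ((∑ y', p x y') * (∑ x', p x' y)))
        + p x y * Real.logb 2 (TXiter p (k+1) x)
        + p x y * Real.logb 2 (TYiter p k y) := by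
    intro x y
    by_cases hpxy : 0 < p x y
    · have hbX := pX_pos p hp hpxy
      have hbY := pY_pos p hp hpxy
      have ht1 := TX_pos p hp (k+1) x hbX
      have ht2 := TY_pos p hp k y hbY
      have hr : (0:ℝ) < (∑ y', p x y') * (∑ x', p x' y) / (TXiter p (k+1) x * TYiter p k y) :=
        div_pos (mul_pos hbX hbY) (mul_pos ht1 ht2)
      have hlog : Real.log ((∑ y', p x y') * (∑ x', p x' y)
            / (TXiter p (k+1) x * TYiter p k y) / p x y)
          ≤ (∑ y', p x y') * (∑ x', p x' y)
            / (TXiter p (k+1) x * TYiter p k y) / p x y - 1 :=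
        Real.log_le_sub_one_of_pos (div_pos hr hpxy)
      have key2 : p x y * Real.log ((∑ y', p x y') * (∑ x', p x' y)
            / (TXiter p (k+1) x * TYiter p k y) / p x y)
          ≤ (∑ y', p x y') * (∑ x', p x' y)
            / (TXiter p (k+1) x * TYiter p k y) - p x y := by
        have := mul_le_mul_of_nonneg_left hlog hpxy.le
        have e : p x y * ((∑ y', p x y') * (∑ x', p x' y)
            / (TXiter p (k+1) x * TYiter p k y) / p x y - 1)
            = (∑ y', p x y') * (∑ x', p x' y)
              / (TXiter p (k+1) x * TYiter p k y) - p x y := by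
          field_simp
        linarith [this, e.le, e.ge]
      rw [Real.log_div hr.ne' hpxy.ne', Real.log_div (mul_pos hbX hbY).ne'
          (mul_pos ht1 ht2).ne', Real.log_mul hbX.ne' hbY.ne',
          Real.log_mul ht1.ne' ht2.ne'] at key2
      simp only [if_pos hpxy, Real.logb,
        Real.log_div hpxy.ne' (mul_pos hbX hbY).ne', Real.log_mul hbX.ne' hbY.ne']
      have main : p x y - (∑ y', p x y') * (∑ x', p x' y) *
            ((1:ℝ) / (TXiter p (k+1) x * TYiter p k y))
          ≤ p x y * (Real.log (p x y) - (Real.log (∑ y', p x y') + Real.log (∑ x', p x' y)))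
            + p x y * Real.log (TXiter p (k+1) x)
            + p x y * Real.log (TYiter p k y) := by
        have e : (∑ y', p x y') * (∑ x', p x' y) *
            ((1:ℝ) / (TXiter p (k+1) x * TYiter p k y))
            = (∑ y', p x y') * (∑ x', p x' y) / (TXiter p (k+1) x * TYiter p k y) := by
          ring
        rw [e]
        nlinarith [key2]
      calc (p x y - (∑ y', p x y') * (∑ x', p x' y) *
            ((1:ℝ) / (TXiter p (k+1) x * TYiter p k y))) / Real.log 2
          ≤ (p x y * (Real.log (p x y) - (Real.log (∑ y', p x y') + Real.log (∑ x', p x' y)))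
            + p x y * Real.log (TXiter p (k+1) x)
            + p x y * Real.log (TYiter p k y)) / Real.log 2 :=
            div_le_div_of_nonneg_right main hL.le
        _ = p x y * ((Real.log (p x y) - (Real.log (∑ y', p x y') + Real.log (∑ x', p x' y)))
              / Real.log 2)
            + p x y * (Real.log (TXiter p (k+1) x) / Real.log 2)
            + p x y * (Real.log (TYiter p k y) / Real.log 2) := by ring
    · have hz : p x y = 0 := le_antisymm (not_lt.mp hpxy) (hp x y)
      simp [hz, hpxy]
  have key := Finset.sum_le_sum (fun x (_ : x ∈ Finset.univ) =>
    Finset.sum_le_sum (fun y (_ : y ∈ Finset.univ) => step1 x y))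
  have hzero : ∑ x, ∑ y, ((p x y - (∑ y', p x y') * (∑ x', p x' y) *
      ((if 0 < p x y then (1:ℝ) else 0) / (TXiter p (k+1) x * TYiter p k y)))
      / Real.log 2) = 0 := by
    have e : ∀ x : 𝒳, ∑ y, ((p x y - (∑ y', p x y') * (∑ x', p x' y) *
        ((if 0 < p x y then (1:ℝ) else 0) / (TXiter p (k+1) x * TYiter p k y)))
        / Real.log 2)
        = ((∑ y, p x y) - ∑ y, (∑ y', p x y') * (∑ x', p x' y) *
            ((if 0 < p x y then (1:ℝ) else 0) / (TXiter p (k+1) x * TYiter p k y)))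
          / Real.log 2 := by
      intro x
      rw [← Finset.sum_div, Finset.sum_sub_distrib]
    rw [Finset.sum_congr rfl fun x _ => e x, ← Finset.sum_div, Finset.sum_sub_distrib,
      hsum, sumB p hp hsum k]
    simp
  have split : ∑ x, ∑ y,
      (p x y * Real.logb 2 (p x y / ((∑ y', p x y') * (∑ x', p x' y)))
        + p x y * Real.logb 2 (TXiter p (k+1) x)
        + p x y * Real.logb 2 (TYiter p k y))
      = (∑ x, ∑ y, p x y * Real.logb 2 (p x y / ((∑ y', p x y') * (∑ x', p x' y))))
        + (∑ x, ∑ y, p x y * Real.logb 2 (TXiter p (k+1) x))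
        + (∑ x, ∑ y, p x y * Real.logb 2 (TYiter p k y)) := by
    simp [Finset.sum_add_distrib]
  have hA1 : ∑ x, (∑ y', p x y') * Real.logb 2 (TXiter p (k+1) x)
      = ∑ x, ∑ y, p x y * Real.logb 2 (TXiter p (k+1) x) :=
    Finset.sum_congr rfl fun x _ => Finset.sum_mul ..
  have hB1 : ∑ y, (∑ x', p x' y) * Real.logb 2 (TYiter p k y)
      = ∑ x, ∑ y, p x y * Real.logb 2 (TYiter p k y) := by
    rw [Finset.sum_comm]
    exact Finset.sum_congr rfl fun y _ => Finset.sum_mul ..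
  rw [hzero, split] at key
  constructor
  · linarith [key, hA1, hB1]
  · linarith [part2]
end

section
/- Consider the symmetric Z channel: input X∈{0,1}, output Y∈{0,1}, with Pr(Y=0|X=0)=1 and Pr(Y=0|X=1)=Pr(Y=1|X=1)=1/2. Let X ∼ Bern(p) with p∈(0,1); then Y ∼ Bern(p/2) and I(X;Y) = h(p/2) − p. Moreover, the adjacency lower bound of Theorem 1 evaluates to: I(X;Y) ≥ 1 − (p/2)log₂ p − (1−p)log₂(2−p) − p log₂(3−p), i.e., h(p/2) − p ≥ 1 − (p/2)log₂ p − (1−p)log₂(2−p) − p log₂(3−p) for all p∈(0,1). -/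
/-!
Statement 13: the symmetric Z channel, input `X ∈ {0,1}` (as `Bool`, `false = 0`,
`true = 1`), output `Y ∈ {0,1}`, with `Pr(Y=0|X=0)=1`,
`Pr(Y=0|X=1)=Pr(Y=1|X=1)=1/2`.  For `X ∼ Bern(p)`, `p ∈ (0,1)`:
`Y ∼ Bern(p/2)`, `I(X;Y) = h(p/2) - p`, and the adjacency lower bound of
Theorem 1 evaluates to
`h(p/2) - p ≥ 1 - (p/2)log₂ p - (1-p)log₂(2-p) - p log₂(3-p)`.
`h` is the binary entropy, logs base 2.
-/

/-- Binary entropy function (base 2). -/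
noncomputable def binEnt (q : ℝ) : ℝ := -q * Real.logb 2 q - (1 - q) * Real.logb 2 (1 - q)

theorem z_channel_adjacency_lower_bound
    (p : ℝ) (hp : 0 < p) (hp1 : p < 1)
    -- input distribution X ∼ Bern(p)
    (pX : Bool → ℝ) (hpXt : pX true = p) (hpXf : pX false = 1 - p)
    -- the symmetric Z channel
    (W : Bool → Bool → ℝ)
    (hW00 : W false false = 1) (hW01 : W false true = 0)
    (hW10 : W true false = 1 / 2) (hW11 : W true true = 1 / 2)
    -- joint law and output marginal
    (pJ : Bool → Bool → ℝ) (hpJ : ∀ x y, pJ x y = pX x * W x y)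
    (pY : Bool → ℝ) (hpY : ∀ y, pY y = ∑ x, pJ x y) :
    -- Y ∼ Bern(p/2)
    (pY true = p / 2 ∧ pY false = 1 - p / 2)
    -- I(X;Y) = h(p/2) - p
    ∧ (∑ x, ∑ y, pJ x y * Real.logb 2 (pJ x y / (pX x * pY y))) =
        binEnt (p / 2) - p
    -- the adjacency lower bound of Theorem 1
    ∧ binEnt (p / 2) - p ≥
        1 - (p / 2) * Real.logb 2 p - (1 - p) * Real.logb 2 (2 - p)
          - p * Real.logb 2 (3 - p) := by
  have hpne : p ≠ 0 := ne_of_gt hp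
  have h1p : (0:ℝ) < 1 - p := by linarith
  have hq : (0:ℝ) < 1 - p / 2 := by linarith
  have hqne : (1 - p / 2 : ℝ) ≠ 0 := ne_of_gt hq
  have h2p : (0:ℝ) < 2 - p := by linarith
  have h3p : (0:ℝ) < 3 - p := by linarith
  -- joint values
  have hJff : pJ false false = 1 - p := by rw [hpJ, hpXf, hW00]; ring
  have hJft : pJ false true = 0 := by rw [hpJ, hpXf, hW01]; ring
  have hJtf : pJ true false = p / 2 := by rw [hpJ, hpXt, hW10]; ring
  have hJtt : pJ true true = p / 2 := by rw [hpJ, hpXt, hW11]; ring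
  have hYt : pY true = p / 2 := by
    rw [hpY, Fintype.sum_bool, hJtt, hJft]; ring
  have hYf : pY false = 1 - p / 2 := by
    rw [hpY, Fintype.sum_bool, hJtf, hJff]; ring
  refine ⟨⟨hYt, hYf⟩, ?_, ?_⟩
  · -- mutual information
    have lb2 : Real.logb 2 2 = 1 := Real.logb_self_eq_one (by norm_num)
    have lhalf : Real.logb 2 (p / 2) = Real.logb 2 p - 1 := by
      rw [Real.logb_div hpne (by norm_num), lb2]
    rw [Fintype.sum_bool, Fintype.sum_bool, Fintype.sum_bool,
      hJff, hJft, hJtf, hJtt, hYt, hYf, hpXt, hpXf]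
    have e1 : (1 - p) / ((1 - p) * (1 - p / 2)) = (1 - p / 2)⁻¹ := by
      field_simp
    have e2 : p / 2 / (p * (1 - p / 2)) = (2 * (1 - p / 2))⁻¹ := by
      field_simp
    have e3 : p / 2 / (p * (p / 2)) = p⁻¹ := by
      field_simp
    rw [e1, e2, e3, Real.logb_inv, Real.logb_inv, Real.logb_inv,
      Real.logb_mul (by norm_num) hqne, lb2]
    unfold binEnt
    rw [lhalf]
    ring
  · -- the inequality
    have lb2 : Real.logb 2 2 = 1 := Real.logb_self_eq_one (by norm_num)
    have lhalf : Real.logb 2 (p / 2) = Real.logb 2 p - 1 := by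
      rw [Real.logb_div hpne (by norm_num), lb2]
    have lq : Real.logb 2 (1 - p / 2) = Real.logb 2 (2 - p) - 1 := by
      have : (1 - p / 2 : ℝ) = (2 - p) / 2 := by ring
      rw [this, Real.logb_div (ne_of_gt h2p) (by norm_num), lb2]
    have key : Real.logb 2 (2 - p) ≤ 2 * Real.logb 2 (3 - p) - 2 := by
      have hle : (2 - p : ℝ) ≤ (3 - p) ^ 2 / 4 := by nlinarith [sq_nonneg (p - 1)]
      have := Real.logb_le_logb_of_le (b := 2) (by norm_num) h2p hle
      have hpow : Real.logb 2 ((3 - p) ^ 2 / 4) = 2 * Real.logb 2 (3 - p) - 2 := by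
        rw [Real.logb_div (by positivity) (by norm_num), Real.logb_pow]
        have l4 : Real.logb 2 (4:ℝ) = 2 := by
          rw [show (4:ℝ) = 2 ^ 2 by norm_num, Real.logb_pow]
          norm_num [lb2]
        rw [l4]; push_cast; ring
      linarith [hpow ▸ this]
    unfold binEnt
    rw [lhalf, lq]
    nlinarith [key, hp.le]
end

section
/- For the symmetric Z channel (Pr(Y=0|X=0)=1, Pr(Y=0|X=1)=Pr(Y=1|X=1)=1/2) with input X ∼ Bern(p), p∈(0,1), the k=1 convex-optimization lower bound evaluates to: I(X;Y) = h(p/2) − p ≥ (p/2)log₂(2−p) + (1−p)log₂(3−p) − (p/2)log₂ p − (1−p/2)log₂(3−2p). In particular this real inequality holds: h(p/2) − p ≥ (p/2)log₂(2−p) + (1−p)log₂(3−p) − (p/2)log₂ p − (1−p/2)log₂(3−2p) for all p∈(0,1). -/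
theorem z_channel_convex_opt_k1_lower_bound
    (p : ℝ) (hp : 0 < p) (hp1 : p < 1)
    -- input distribution X ∼ Bern(p)
    (pX : Bool → ℝ) (hpXt : pX true = p) (hpXf : pX false = 1 - p)
    -- the symmetric Z channel (false = 0, true = 1)
    (W : Bool → Bool → ℝ)
    (hW00 : W false false = 1) (hW01 : W false true = 0)
    (hW10 : W true false = 1 / 2) (hW11 : W true true = 1 / 2)
    -- joint law and output marginal
    (pJ : Bool → Bool → ℝ) (hpJ : ∀ x y, pJ x y = pX x * W x y)
    (pY : Bool → ℝ) (hpY : ∀ y, pY y = ∑ x, pJ x y) :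
    -- I(X;Y) = h(p/2) - p ...
    (∑ x, ∑ y, pJ x y * Real.logb 2 (pJ x y / (pX x * pY y))) =
        binEnt (p / 2) - p
    -- ... and the k = 1 convex-optimization lower bound holds:
    ∧ binEnt (p / 2) - p ≥
        (p / 2) * Real.logb 2 (2 - p) + (1 - p) * Real.logb 2 (3 - p)
          - (p / 2) * Real.logb 2 p - (1 - p / 2) * Real.logb 2 (3 - 2 * p) := by
  have hl2 : (0:ℝ) < Real.log 2 := Real.log_pos (by norm_num)
  have hl2ne : Real.log 2 ≠ 0 := ne_of_gt hl2
  have hpne : p ≠ 0 := ne_of_gt hp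
  have h1p : (0:ℝ) < 1 - p := by linarith
  have h2p : (0:ℝ) < 2 - p := by linarith
  have h3p : (0:ℝ) < 3 - p := by linarith
  have h32p : (0:ℝ) < 3 - 2 * p := by linarith
  have h1p2 : (0:ℝ) < 1 - p / 2 := by linarith
  -- log identities
  have r1 : Real.log (p / 2) = Real.log p - Real.log 2 :=
    Real.log_div hpne (by norm_num)
  have r2 : Real.log (1 - p / 2) = Real.log (2 - p) - Real.log 2 := by
    have : 1 - p / 2 = (2 - p) / 2 := by ring
    rw [this, Real.log_div (ne_of_gt h2p) (by norm_num)]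
  constructor
  · -- Part 1: compute the mutual information
    have eJtt : pJ true true = p / 2 := by rw [hpJ, hpXt, hW11]; ring
    have eJtf : pJ true false = p / 2 := by rw [hpJ, hpXt, hW10]; ring
    have eJff : pJ false false = 1 - p := by rw [hpJ, hpXf, hW00]; ring
    have eJft : pJ false true = 0 := by rw [hpJ, hpXf, hW01]; ring
    have eYt : pY true = p / 2 := by
      rw [hpY, Fintype.sum_bool, eJtt, eJft]; ring
    have eYf : pY false = 1 - p / 2 := by
      rw [hpY, Fintype.sum_bool, eJtf, eJff]; ring
    rw [Fintype.sum_bool, Fintype.sum_bool, Fintype.sum_bool,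
      eJtt, eJtf, eJff, eJft, eYt, eYf, hpXt, hpXf]
    have a1 : p / 2 / (p * (p / 2)) = p⁻¹ := by field_simp
    have a2 : p / 2 / (p * (1 - p / 2)) = (2 - p)⁻¹ := by
      field_simp
    have a3 : (1 - p) / ((1 - p) * (1 - p / 2)) = (1 - p / 2)⁻¹ := by
      rw [div_eq_iff (by positivity), inv_mul_eq_div, eq_div_iff (ne_of_gt h1p2)]
    rw [a1, a2, a3, Real.logb_inv, Real.logb_inv, Real.logb_inv]
    unfold binEnt
    simp only [Real.logb, r1, r2]
    field_simp
    ring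
  · -- Part 2: the lower bound
    rw [ge_iff_le, ← sub_nonneg]
    -- key log bounds
    have key1 : Real.log 2 + Real.log (3 - 2 * p) - Real.log (3 - p) - Real.log (2 - p)
        ≥ p * (1 - p) / (2 * (3 - 2 * p)) := by
      have hx : (0:ℝ) < (3 - p) * (2 - p) / (2 * (3 - 2 * p)) := by positivity
      have hb := Real.log_le_sub_one_of_pos hx
      have hlog : Real.log ((3 - p) * (2 - p) / (2 * (3 - 2 * p)))
          = Real.log (3 - p) + Real.log (2 - p) - (Real.log 2 + Real.log (3 - 2 * p)) := by
        rw [Real.log_div (by positivity) (by positivity),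
          Real.log_mul (ne_of_gt h3p) (ne_of_gt h2p),
          Real.log_mul (by norm_num) (ne_of_gt h32p)]
      rw [hlog] at hb
      have heq : (3 - p) * (2 - p) / (2 * (3 - 2 * p)) - 1
          = -(p * (1 - p) / (2 * (3 - 2 * p))) := by
        rw [eq_neg_iff_add_eq_zero, div_sub_one (ne_of_gt (by linarith : (0:ℝ) < 2 * (3 - 2 * p))),
          ← add_div, div_eq_zero_iff]
        left; ring
      rw [heq] at hb
      linarith
    have key2 : 2 * Real.log (2 - p) - Real.log (3 - 2 * p)
        ≤ (1 - p) ^ 2 / (3 - 2 * p) := by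
      have hx : (0:ℝ) < (2 - p) ^ 2 / (3 - 2 * p) := by positivity
      have hb := Real.log_le_sub_one_of_pos hx
      have hlog : Real.log ((2 - p) ^ 2 / (3 - 2 * p))
          = 2 * Real.log (2 - p) - Real.log (3 - 2 * p) := by
        rw [Real.log_div (by positivity) (ne_of_gt h32p), Real.log_pow]
        push_cast; ring
      rw [hlog] at hb
      have heq : (2 - p) ^ 2 / (3 - 2 * p) - 1 = (1 - p) ^ 2 / (3 - 2 * p) := by
        field_simp; ring
      rw [heq] at hb
      exact hb
    have hF : 2 * (1 - p) * (Real.log 2 + Real.log (3 - 2 * p)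
          - Real.log (3 - p) - Real.log (2 - p))
        - p * (2 * Real.log (2 - p) - Real.log (3 - 2 * p)) ≥ 0 := by
      have e1 : 2 * (1 - p) * (p * (1 - p) / (2 * (3 - 2 * p)))
          = p * ((1 - p) ^ 2 / (3 - 2 * p)) := by
        field_simp
      nlinarith [mul_le_mul_of_nonneg_left key1 (by linarith : (0:ℝ) ≤ 2 * (1 - p)),
        mul_le_mul_of_nonneg_left key2 (le_of_lt hp)]
    have hgoal : binEnt (p / 2) - p -
        ((p / 2) * Real.logb 2 (2 - p) + (1 - p) * Real.logb 2 (3 - p)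
          - (p / 2) * Real.logb 2 p - (1 - p / 2) * Real.logb 2 (3 - 2 * p))
        = (2 * (1 - p) * (Real.log 2 + Real.log (3 - 2 * p)
            - Real.log (3 - p) - Real.log (2 - p))
          - p * (2 * Real.log (2 - p) - Real.log (3 - 2 * p))) / (2 * Real.log 2) := by
      unfold binEnt
      simp only [Real.logb, r1, r2]
      field_simp
      ring
    rw [hgoal]
    positivity
end

section
/- For the symmetric Z channel with input X ∼ Bern(p), p∈(0,1), consider the action A uniform on the two functions a₁(x)=x and a₂(x)=0 (each with probability 1/2), which is consistent with the channel. Then: E_A[log₂ E_{XY}[𝟙(A(X)=Y)]] = log₂(1−p/2), and E_{X,Y}[log₂ E_A[𝟙(A(X)=Y)/E_{X,Y}𝟙(A(X)=Y)]] = −p − log₂(1−p/2); consequently the upper bound of Theorem 2 evaluates to H(Y) − p = h(p/2) − p, which equals I(X;Y) exactly. -/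
set_option linter.unnecessarySeqFocus false in
theorem z_channel_action_upper_bound_tight
    (p : ℝ) (hp : 0 < p) (hp1 : p < 1)
    -- input distribution X ∼ Bern(p)
    (pX : Bool → ℝ) (hpXt : pX true = p) (hpXf : pX false = 1 - p)
    -- the symmetric Z channel (false = 0, true = 1)
    (W : Bool → Bool → ℝ)
    (hW00 : W false false = 1) (hW01 : W false true = 0)
    (hW10 : W true false = 1 / 2) (hW11 : W true true = 1 / 2)
    -- joint law and output marginal
    (pJ : Bool → Bool → ℝ) (hpJ : ∀ x y, pJ x y = pX x * W x y)
    (pY : Bool → ℝ) (hpY : ∀ y, pY y = ∑ x, pJ x y)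
    -- q a = E_{X,Y} 𝟙(a(X) = Y) for the two actions a₁ = id, a₂ = const false
    (q₁ q₂ : ℝ)
    (hq₁ : q₁ = ∑ x, ∑ y, pJ x y * (if x = y then (1 : ℝ) else 0))
    (hq₂ : q₂ = ∑ x, ∑ y, pJ x y * (if false = y then (1 : ℝ) else 0)) :
    -- the uniform action on {a₁, a₂} is consistent with the channel
    (∀ x y, W x y = 1 / 2 * (if x = y then (1 : ℝ) else 0)
                    + 1 / 2 * (if false = y then (1 : ℝ) else 0))
    -- E_A log₂ E_{X,Y} 𝟙(A(X) = Y) = log₂(1 - p/2)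
    ∧ (1 / 2) * Real.logb 2 q₁ + (1 / 2) * Real.logb 2 q₂ =
        Real.logb 2 (1 - p / 2)
    -- E_{X,Y} log₂ E_A [𝟙(A(X)=Y)/E_{X,Y}𝟙(A(X)=Y)] = -p - log₂(1 - p/2)
    ∧ (∑ x, ∑ y, pJ x y * Real.logb 2
          (1 / 2 * ((if x = y then (1 : ℝ) else 0) / q₁)
            + 1 / 2 * ((if false = y then (1 : ℝ) else 0) / q₂))) =
        -p - Real.logb 2 (1 - p / 2)
    -- the Theorem-2 upper bound evaluates to H(Y) - p = h(p/2) - p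
    ∧ (-(∑ y, pY y * Real.logb 2 (pY y)))
        + ((1 / 2) * Real.logb 2 q₁ + (1 / 2) * Real.logb 2 q₂)
        + (∑ x, ∑ y, pJ x y * Real.logb 2
            (1 / 2 * ((if x = y then (1 : ℝ) else 0) / q₁)
              + 1 / 2 * ((if false = y then (1 : ℝ) else 0) / q₂))) =
        binEnt (p / 2) - p
    -- which equals the mutual information exactly
    ∧ (∑ x, ∑ y, pJ x y * Real.logb 2 (pJ x y / (pX x * pY y))) =
        binEnt (p / 2) - p := by

  have hq : (0:ℝ) < 1 - p / 2 := by linarith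
  have hqne : (1 - p / 2 : ℝ) ≠ 0 := ne_of_gt hq
  have hpne : p ≠ 0 := ne_of_gt hp
  have hp2 : (p / 2 : ℝ) ≠ 0 := by positivity
  have h1p : (1 - p : ℝ) ≠ 0 := by linarith
  have hq1 : q₁ = 1 - p / 2 := by
    simp [hq₁, Fintype.sum_bool, hpJ, hpXt, hpXf, hW00, hW01, hW10, hW11]
    ring
  have hq2 : q₂ = 1 - p / 2 := by
    simp [hq₂, Fintype.sum_bool, hpJ, hpXt, hpXf, hW00, hW01, hW10, hW11]
    ring
  have hpYf : pY false = 1 - p / 2 := by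
    simp [hpY, Fintype.sum_bool, hpJ, hpXt, hpXf, hW00, hW10]; ring
  have hpYt : pY true = p / 2 := by
    simp [hpY, Fintype.sum_bool, hpJ, hpXt, hpXf, hW01, hW11]; ring
  have hlog2 : Real.logb 2 (2 : ℝ) = 1 := Real.logb_self_eq_one (by norm_num)
  have hinv : Real.logb 2 ((1 - p / 2)⁻¹) = -Real.logb 2 (1 - p / 2) := Real.logb_inv _ _
  have h2q : Real.logb 2 ((2 * (1 - p / 2))⁻¹) = -(1 + Real.logb 2 (1 - p / 2)) := by
    rw [Real.logb_inv, Real.logb_mul two_ne_zero hqne, hlog2]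
  have j1 : pJ false false = 1 - p := by rw [hpJ, hpXf, hW00]; ring
  have j2 : pJ false true = 0 := by rw [hpJ, hpXf, hW01]; ring
  have j3 : pJ true false = p / 2 := by rw [hpJ, hpXt, hW10]; ring
  have j4 : pJ true true = p / 2 := by rw [hpJ, hpXt, hW11]; ring
  have key3 : (∑ x, ∑ y, pJ x y * Real.logb 2
          (1 / 2 * ((if x = y then (1 : ℝ) else 0) / q₁)
            + 1 / 2 * ((if false = y then (1 : ℝ) else 0) / q₂))) =
        -p - Real.logb 2 (1 - p / 2) := by
    have e1 : (1 / 2 * ((1:ℝ) / q₁) + 1 / 2 * (1 / q₂)) = (1 - p / 2)⁻¹ := by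
      rw [hq1, hq2]; field_simp; norm_num
    have e2 : (1 / 2 * ((0:ℝ) / q₁) + 1 / 2 * (1 / q₂)) = (2 * (1 - p / 2))⁻¹ := by
      rw [hq2]; field_simp; simp
    have e3 : (1 / 2 * ((1:ℝ) / q₁) + 1 / 2 * (0 / q₂)) = (2 * (1 - p / 2))⁻¹ := by
      rw [hq1]; field_simp; simp
    simp only [Fintype.sum_bool, if_true, if_false, reduceIte, reduceCtorEq]
    rw [e1, e2, e3, hinv, h2q, j1, j2, j3, j4]; ring
  have hbin : binEnt (p / 2) = -(p/2) * (Real.logb 2 p - 1) - (1 - p/2) * Real.logb 2 (1 - p/2) := by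
    unfold binEnt
    have : Real.logb 2 (p / 2) = Real.logb 2 p - 1 := by
      rw [Real.logb_div hpne two_ne_zero, hlog2]
    rw [this]
  refine ⟨?_, ?_, key3, ?_, ?_⟩
  · intro x y; cases x <;> cases y <;> simp [hW00, hW01, hW10, hW11] <;> norm_num
  · rw [hq1, hq2]; ring
  · rw [key3, hq1, hq2, hbin, Fintype.sum_bool, hpYf, hpYt]
    have : Real.logb 2 (p / 2) = Real.logb 2 p - 1 := by
      rw [Real.logb_div hpne two_ne_zero, hlog2]
    rw [this]; ring
  · simp only [Fintype.sum_bool]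
    have a1 : (1 - p) / (pX false * pY false) = (1 - p / 2)⁻¹ := by
      rw [hpXf, hpYf, div_mul_eq_div_div, div_self h1p, one_div]
    have a3 : (p / 2) / (pX true * pY false) = (2 * (1 - p / 2))⁻¹ := by
      rw [hpXt, hpYf, show p / 2 = p * (2:ℝ)⁻¹ by ring, mul_div_mul_left _ _ hpne,
        div_eq_mul_inv, ← mul_inv]
    have a4 : (p / 2) / (pX true * pY true) = p⁻¹ := by
      rw [hpXt, hpYt, mul_comm, div_mul_eq_div_div, div_self hp2, one_div]
    rw [j1, j2, j3, j4, a1, a3, a4, hinv, h2q, Real.logb_inv, hbin]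
    ring
end

section
/- Let X, Z, W ∈ {0,1}ⁿ be mutually independent random vectors, where the entries of X are i.i.d. Bern(1/2) and the entries of Z and of W are i.i.d. Bern(α) for some α ∈ [0,1/2]. Let Y = X ⊕ Z (componentwise XOR). Then for any Boolean function f : {0,1}ⁿ → {0,1}: I(Y; f(X)) ≤ H(f(X)) + E_W[ log₂ Pr( f(X ⊕ W ⊕ Z) = f(X) ) ], where the inner probability is over X and Z with W fixed. -/
/-!
Statement 17 (Theorem 6 of the paper): let `X, Z, W ∈ {0,1}ⁿ` be mutually
independent, `X` uniform (i.i.d. `Bern(1/2)`), `Z` and `W` with i.i.d.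
`Bern(α)` entries, `α ∈ [0,1/2]`, and `Y = X ⊕ Z` componentwise.  For any
Boolean `f : {0,1}ⁿ → {0,1}`,
`I(Y; f(X)) ≤ H(f(X)) + E_W log₂ Pr( f(X ⊕ W ⊕ Z) = f(X) )`,
the inner probability being over `(X, Z)` with `W` fixed.  Logs base 2.
-/

/-- auxiliary: the conditional law of `f(X)` given `Y = y`. -/
private def gfun (n : ℕ) (μB : (Fin n → Bool) → ℝ) (f : (Fin n → Bool) → Bool)
    (y : Fin n → Bool) (b : Bool) : ℝ :=
  ∑ z, μB z * (if f (fun i => xor (y i) (z i)) = b then (1 : ℝ) else 0)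

/-- reindexing a sum over `{0,1}ⁿ` by a XOR-shift -/
private lemma sum_xor_reindex {n : ℕ} (y : Fin n → Bool) (F : (Fin n → Bool) → ℝ) :
    ∑ x : Fin n → Bool, F x = ∑ x : Fin n → Bool, F (fun i => xor (x i) (y i)) :=
  (Fintype.sum_bijective (fun x => fun i => xor (x i) (y i))
    (Function.Involutive.bijective (fun x => by funext i; simp [Bool.xor_assoc]))
    (fun x => F (fun i => xor (x i) (y i))) F (fun x => rfl)).symm

private lemma sum_bool_pick (a : Bool) (t : Bool → ℝ) :
    ∑ b, (if a = b then (1 : ℝ) else 0) * t b = t a := by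
  cases a <;> simp

/-- Jensen's inequality for `logb 2`, proved by hand via `log x ≤ x - 1`. -/
private lemma jensen_logb {ι : Type*} [Fintype ι] [Nonempty ι] (c a : ι → ℝ)
    (hc : ∀ i, 0 < c i) (hc1 : ∑ i, c i = 1) (ha : ∀ i, 0 < a i) :
    ∑ i, c i * Real.logb 2 (a i) ≤ Real.logb 2 (∑ i, c i * a i) := by
  have hlog2 : (0 : ℝ) < Real.log 2 := Real.log_pos one_lt_two
  set m := ∑ i, c i * a i with hm
  have hmpos : 0 < m :=
    Finset.sum_pos (fun i _ => mul_pos (hc i) (ha i)) Finset.univ_nonempty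
  have key : ∀ i, c i * Real.logb 2 (a i) ≤
      c i * Real.logb 2 m + c i * (a i / m - 1) / Real.log 2 := by
    intro i
    have h1 : Real.log (a i / m) ≤ a i / m - 1 :=
      Real.log_le_sub_one_of_pos (div_pos (ha i) hmpos)
    have h2 : Real.logb 2 (a i) = Real.logb 2 m + Real.log (a i / m) / Real.log 2 := by
      rw [Real.logb, Real.logb, Real.log_div (ne_of_gt (ha i)) (ne_of_gt hmpos)]
      ring
    rw [h2, mul_add]
    have h3 : c i * (Real.log (a i / m) / Real.log 2) ≤ c i * ((a i / m - 1) / Real.log 2) := by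
      apply mul_le_mul_of_nonneg_left _ (le_of_lt (hc i))
      gcongr
    calc c i * Real.logb 2 m + c i * (Real.log (a i / m) / Real.log 2)
        ≤ c i * Real.logb 2 m + c i * ((a i / m - 1) / Real.log 2) := by linarith
      _ = c i * Real.logb 2 m + c i * (a i / m - 1) / Real.log 2 := by ring
  calc ∑ i, c i * Real.logb 2 (a i)
      ≤ ∑ i, (c i * Real.logb 2 m + c i * (a i / m - 1) / Real.log 2) :=
        Finset.sum_le_sum (fun i _ => key i)
    _ = Real.logb 2 m := by
        rw [Finset.sum_add_distrib, ← Finset.sum_mul, hc1, one_mul, ← Finset.sum_div]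
        have hz : ∑ i, c i * (a i / m - 1) = 0 := by
          have : ∑ i, c i * (a i / m - 1) = (∑ i, c i * a i) / m - ∑ i, c i := by
            rw [Finset.sum_div, ← Finset.sum_sub_distrib]
            apply Finset.sum_congr rfl
            intro i _; ring
          rw [this, ← hm, div_self (ne_of_gt hmpos), hc1]; ring
        rw [hz, zero_div, add_zero]

theorem boolean_function_upper_bound
    (n : ℕ) (α : ℝ) (hα0 : 0 ≤ α) (hα : α ≤ 1 / 2)
    (f : (Fin n → Bool) → Bool)
    -- distribution of X (uniform) and of Z, W (i.i.d. Bern(α) entries)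
    (μX : (Fin n → Bool) → ℝ) (hμX : ∀ x, μX x = (1 / 2 : ℝ) ^ n)
    (μB : (Fin n → Bool) → ℝ)
    (hμB : ∀ z, μB z = ∏ i, (if z i then α else 1 - α))
    -- joint law of (Y, f(X)), where Y = X ⊕ Z
    (q : (Fin n → Bool) → Bool → ℝ)
    (hq : ∀ y b, q y b = ∑ x, (if f x = b then (1 : ℝ) else 0) * μX x *
      μB (fun i => xor (x i) (y i)))
    -- marginals of Y and of f(X)
    (qY : (Fin n → Bool) → ℝ) (hqY : ∀ y, qY y = ∑ b, q y b)
    (qB : Bool → ℝ) (hqB : ∀ b, qB b = ∑ x, μX x * (if f x = b then (1 : ℝ) else 0))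
    -- r w = Pr( f(X ⊕ w ⊕ Z) = f(X) ), over (X, Z) with w fixed
    (r : (Fin n → Bool) → ℝ)
    (hr : ∀ w, r w = ∑ x, ∑ z, μX x * μB z *
      (if f (fun i => xor (xor (x i) (w i)) (z i)) = f x then (1 : ℝ) else 0)) :
    (∑ y, ∑ b, q y b * Real.logb 2 (q y b / (qY y * qB b))) ≤
      (-(∑ b, qB b * Real.logb 2 (qB b))) + ∑ w, μB w * Real.logb 2 (r w) := by
  classical
  set g := gfun n μB f with hgdef
  set c : ℝ := (1 / 2 : ℝ) ^ n with hcdef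
  have hc : 0 < c := by positivity
  -- μB is nonnegative
  have hμB0 : ∀ z, 0 ≤ μB z := by
    intro z; rw [hμB]
    apply Finset.prod_nonneg
    intro i _
    by_cases h : z i <;> simp [h] <;> linarith
  -- μB sums to 1
  have hsum1 : ∑ z, μB z = 1 := by
    simp only [hμB]
    rw [show (∑ z : Fin n → Bool, ∏ i, (if z i then α else 1 - α))
        = ∏ i : Fin n, ∑ b : Bool, (if b then α else 1 - α) from
      (Fintype.prod_sum (κ := fun _ : Fin n => Bool) (fun _ b => if b then α else 1 - α)).symm]
    have : ∀ i : Fin n, (∑ b : Bool, (if b then α else 1 - α)) = 1 := by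
      intro i; simp
    calc (∏ i : Fin n, ∑ b : Bool, (if b then α else 1 - α))
        = ∏ _i : Fin n, (1 : ℝ) := Finset.prod_congr rfl (fun i _ => this i)
      _ = 1 := Finset.prod_const_one
  -- q y b = c * g y b
  have hqg : ∀ y b, q y b = c * g y b := by
    intro y b
    rw [hq, sum_xor_reindex y (fun x => (if f x = b then (1 : ℝ) else 0) * μX x *
      μB (fun i => xor (x i) (y i)))]
    simp only [hgdef, gfun, Finset.mul_sum]
    apply Finset.sum_congr rfl
    intro x _
    have h1 : (fun i => xor (xor (x i) (y i)) (y i)) = x := by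
      funext i; simp [Bool.xor_assoc]
    have h2 : (fun i => xor (x i) (y i)) = (fun i => xor (y i) (x i)) := by
      funext i; exact Bool.xor_comm _ _
    simp only [h1, h2, hμX, hcdef]
    ring
  -- g is nonnegative
  have hg0 : ∀ y b, 0 ≤ g y b := by
    intro y b
    apply Finset.sum_nonneg
    intro z _
    apply mul_nonneg (hμB0 z)
    by_cases h : f (fun i => xor (y i) (z i)) = b <;> simp [h]
  -- ∑ b, g y b = 1
  have hgsum : ∀ y, ∑ b, g y b = 1 := by
    intro y
    rw [hgdef]
    unfold gfun
    rw [Finset.sum_comm]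
    have : ∀ z : Fin n → Bool, ∑ b, μB z *
        (if f (fun i => xor (y i) (z i)) = b then (1 : ℝ) else 0) = μB z := by
      intro z
      rw [← Finset.mul_sum]
      have := sum_bool_pick (f (fun i => xor (y i) (z i))) (fun _ => (1 : ℝ))
      simp only [mul_one] at this
      rw [this, mul_one]
    rw [Finset.sum_congr rfl (fun z _ => this z), hsum1]
  -- qY y = c
  have hqYc : ∀ y, qY y = c := by
    intro y
    rw [hqY]
    simp only [hqg]
    rw [← Finset.mul_sum, hgsum, mul_one]
  -- qB b = ∑ y, q y b
  have hqBsum : ∀ b, qB b = ∑ y, c * g y b := by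
    intro b
    rw [hqB]
    simp only [← hqg, hq]
    rw [Finset.sum_comm]
    apply Finset.sum_congr rfl
    intro x _
    rw [sum_xor_reindex x (fun y => (if f x = b then (1 : ℝ) else 0) * μX x *
      μB (fun i => xor (x i) (y i)))]
    have h1 : ∀ y : Fin n → Bool, (fun i => xor (x i) (xor (y i) (x i))) = y := by
      intro y; funext i
      cases x i <;> cases y i <;> rfl
    simp only [h1]
    rw [← Finset.mul_sum, hsum1, mul_one]
    ring
  -- r w = ∑ y, c * g y (f (y ⊕ w))
  have hrg : ∀ w, r w = ∑ y, c * g y (f (fun i => xor (y i) (w i))) := by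
    intro w
    rw [hr]
    have step1 : ∀ x : Fin n → Bool,
        (∑ z, μX x * μB z * (if f (fun i => xor (xor (x i) (w i)) (z i)) = f x
          then (1 : ℝ) else 0))
        = ∑ z : Fin n → Bool, μX x * μB (fun i => xor (z i) (x i)) *
            (if f x = f (fun i => xor (z i) (w i)) then (1 : ℝ) else 0) := by
      intro x
      rw [sum_xor_reindex x (fun z => μX x * μB z *
        (if f (fun i => xor (xor (x i) (w i)) (z i)) = f x then (1 : ℝ) else 0))]
      apply Finset.sum_congr rfl
      intro z _
      have h1 : (fun i => xor (xor (x i) (w i)) (xor (z i) (x i)))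
          = (fun i => xor (z i) (w i)) := by
        funext i; cases x i <;> cases w i <;> cases z i <;> rfl
      rw [h1]
      by_cases h : f (fun i => xor (z i) (w i)) = f x
      · simp [h]
        try ring
      · have h' : ¬ f x = f (fun i => xor (z i) (w i)) := fun hh => h hh.symm
        simp [h, h']
    rw [Finset.sum_congr rfl (fun x _ => step1 x), Finset.sum_comm]
    apply Finset.sum_congr rfl
    intro y _
    rw [sum_xor_reindex y (fun x => μX x * μB (fun i => xor (y i) (x i)) *
      (if f x = f (fun i => xor (y i) (w i)) then (1 : ℝ) else 0))]
    have h2 : ∀ x : Fin n → Bool, (fun i => xor (y i) (xor (x i) (y i))) = x := by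
      intro x; funext i; cases x i <;> cases y i <;> rfl
    simp only [h2, hμX, hgdef]
    unfold gfun
    rw [Finset.mul_sum]
    apply Finset.sum_congr rfl
    intro z _
    have h3 : (fun i => xor (z i) (y i)) = (fun i => xor (y i) (z i)) := by
      funext i; exact Bool.xor_comm _ _
    rw [h3, hcdef]
    ring
  -- qB is nonnegative, and positive whenever some g y b > 0
  have hqB0 : ∀ b, 0 ≤ qB b := by
    intro b
    rw [hqBsum]
    exact Finset.sum_nonneg (fun y _ => mul_nonneg (le_of_lt hc) (hg0 y b))
  have hqBge : ∀ y b, c * g y b ≤ qB b := by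
    intro y b
    rw [hqBsum]
    exact Finset.single_le_sum
      (fun y' _ => mul_nonneg (le_of_lt hc) (hg0 y' b)) (Finset.mem_univ y)
  -- ∑ over all of {0,1}ⁿ of c is 1
  have hcsum : ∑ _y : Fin n → Bool, c = 1 := by
    rw [Finset.sum_const, Finset.card_univ]
    simp only [Fintype.card_fun, Fintype.card_bool, Fintype.card_fin, nsmul_eq_mul, hcdef]
    push_cast
    rw [← mul_pow]
    norm_num
  -- step 1: rewrite the mutual information
  have lhs_eq : (∑ y, ∑ b, q y b * Real.logb 2 (q y b / (qY y * qB b)))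
      = (∑ y, ∑ b, c * g y b * Real.logb 2 (g y b))
        - ∑ b, qB b * Real.logb 2 (qB b) := by
    have pt : ∀ y b, q y b * Real.logb 2 (q y b / (qY y * qB b))
        = c * g y b * Real.logb 2 (g y b) - c * g y b * Real.logb 2 (qB b) := by
      intro y b
      rw [hqg, hqYc, mul_div_mul_left _ _ (ne_of_gt hc)]
      by_cases h : g y b = 0
      · simp [h]
      · have hgpos : 0 < g y b := lt_of_le_of_ne (hg0 y b) (Ne.symm h)
        have hqBpos : 0 < qB b := lt_of_lt_of_le (mul_pos hc hgpos) (hqBge y b)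
        rw [Real.logb_div (ne_of_gt hgpos) (ne_of_gt hqBpos)]
        ring
    rw [show (∑ y, ∑ b, q y b * Real.logb 2 (q y b / (qY y * qB b)))
        = ∑ y, ∑ b, (c * g y b * Real.logb 2 (g y b)
            - c * g y b * Real.logb 2 (qB b)) from
      Finset.sum_congr rfl (fun y _ => Finset.sum_congr rfl (fun b _ => pt y b))]
    rw [show (∑ y, ∑ b, (c * g y b * Real.logb 2 (g y b)
          - c * g y b * Real.logb 2 (qB b)))
        = (∑ y, ∑ b, c * g y b * Real.logb 2 (g y b))
          - ∑ y, ∑ b, c * g y b * Real.logb 2 (qB b) from by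
      rw [← Finset.sum_sub_distrib]
      exact Finset.sum_congr rfl (fun y _ => Finset.sum_sub_distrib _ _)]
    congr 1
    rw [Finset.sum_comm]
    apply Finset.sum_congr rfl
    intro b _
    rw [← Finset.sum_mul, ← hqBsum b]
  rw [lhs_eq]
  -- it remains to show: ∑ y ∑ b c g logb g ≤ ∑ w μB w logb (r w)
  have main : (∑ y, ∑ b, c * g y b * Real.logb 2 (g y b))
      ≤ ∑ w, μB w * Real.logb 2 (r w) := by
    -- rewrite entropy term via expectation over w
    have part : ∀ y : Fin n → Bool, (∑ b, g y b * Real.logb 2 (g y b))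
        = ∑ w, μB w * Real.logb 2 (g y (f (fun i => xor (y i) (w i)))) := by
      intro y
      have pick : ∀ w : Fin n → Bool,
          μB w * Real.logb 2 (g y (f (fun i => xor (y i) (w i))))
          = ∑ b, μB w * ((if f (fun i => xor (y i) (w i)) = b then (1 : ℝ) else 0)
              * Real.logb 2 (g y b)) := by
        intro w
        rw [← Finset.mul_sum, sum_bool_pick]
      rw [Finset.sum_congr rfl (fun w _ => pick w), Finset.sum_comm]
      apply Finset.sum_congr rfl
      intro b _
      have : ∀ w : Fin n → Bool,
          μB w * ((if f (fun i => xor (y i) (w i)) = b then (1 : ℝ) else 0)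
            * Real.logb 2 (g y b))
          = (μB w * (if f (fun i => xor (y i) (w i)) = b then (1 : ℝ) else 0))
            * Real.logb 2 (g y b) := by
        intro w; ring
      rw [Finset.sum_congr rfl (fun w _ => this w), ← Finset.sum_mul]
      rfl
    have swap : (∑ y, ∑ b, c * g y b * Real.logb 2 (g y b))
        = ∑ w, μB w * ∑ y, c * Real.logb 2 (g y (f (fun i => xor (y i) (w i)))) := by
      rw [show (∑ y, ∑ b, c * g y b * Real.logb 2 (g y b))
          = ∑ y, c * ∑ b, g y b * Real.logb 2 (g y b) from by
        apply Finset.sum_congr rfl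
        intro y _
        rw [Finset.mul_sum]
        exact Finset.sum_congr rfl (fun b _ => by ring)]
      rw [show (∑ y : Fin n → Bool, c * ∑ b, g y b * Real.logb 2 (g y b))
          = ∑ y : Fin n → Bool, ∑ w,
              c * (μB w * Real.logb 2 (g y (f (fun i => xor (y i) (w i))))) from by
        apply Finset.sum_congr rfl
        intro y _
        rw [part y, Finset.mul_sum]]
      rw [Finset.sum_comm]
      apply Finset.sum_congr rfl
      intro w _
      rw [Finset.mul_sum]
      exact Finset.sum_congr rfl (fun y _ => by ring)
    rw [swap]
    apply Finset.sum_le_sum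
    intro w _
    by_cases hw : μB w = 0
    · simp [hw]
    · have hwpos : 0 < μB w := lt_of_le_of_ne (hμB0 w) (Ne.symm hw)
      have hapos : ∀ y : Fin n → Bool, 0 < g y (f (fun i => xor (y i) (w i))) := by
        intro y
        have hle : μB w ≤ g y (f (fun i => xor (y i) (w i))) := by
          rw [hgdef]
          unfold gfun
          have : μB w = μB w * (if f (fun i => xor (y i) (w i))
              = f (fun i => xor (y i) (w i)) then (1 : ℝ) else 0) := by simp
          rw [this]
          apply Finset.single_le_sum (f := fun z => μB z *
            (if f (fun i => xor (y i) (z i)) = f (fun i => xor (y i) (w i))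
              then (1 : ℝ) else 0)) _ (Finset.mem_univ w)
          intro z _
          apply mul_nonneg (hμB0 z)
          by_cases h : f (fun i => xor (y i) (z i)) = f (fun i => xor (y i) (w i)) <;>
            simp [h]
        exact lt_of_lt_of_le hwpos hle
      have jensen := jensen_logb (fun _ : Fin n → Bool => c)
        (fun y => g y (f (fun i => xor (y i) (w i)))) (fun _ => hc) hcsum hapos
      rw [← hrg w] at jensen
      exact mul_le_mul_of_nonneg_left jensen (le_of_lt hwpos)
  linarith
end

section
/- Identify {0,1} with {−1,1} (0↦1, 1↦−1, XOR↦product). Let X ∈ {−1,1}ⁿ have i.i.d. uniform entries, let Z have i.i.d. entries with Pr(Zᵢ=−1)=α, and Y = X·Z componentwise, with α∈[0,1/2]. Then for any Boolean f : {−1,1}ⁿ → {−1,1}: I(Y; f(X)) ≤ H(f(X)) − 1 + E_W[ log₂( 1 + Σ_{S⊆[n]} f̂(S)² (1−2α)^{|S|} Π_{i∈S} Wᵢ ) ], where W ∈ {−1,1}ⁿ has i.i.d. entries with Pr(Wᵢ=−1)=α, independent of (X,Z), and f̂(S) = E[ f(X) Π_{i∈S} Xᵢ ] are the Fourier–Walsh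 coefficients of f. -/
/-!
Statement 18 (Corollary 1 of the paper): identify `{0,1}` with `{-1,1}` via
`0 ↦ 1`, `1 ↦ -1`, XOR ↦ product (we keep `Bool` as the carrier and use
`sgn b = if b then -1 else 1`).  Let `X ∈ {-1,1}ⁿ` be uniform, `Z` have i.i.d.
entries with `Pr(Zᵢ = -1) = α`, `Y = X·Z` componentwise, `α ∈ [0,1/2]`.  For
any Boolean `f : {-1,1}ⁿ → {-1,1}`,
`I(Y; f(X)) ≤ H(f(X)) - 1 + E_W log₂ (1 + ∑_{S⊆[n]} f̂(S)² (1-2α)^{|S|} ∏_{i∈S} Wᵢ)`,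
where `W` has i.i.d. entries with `Pr(Wᵢ = -1) = α`, independent of `(X,Z)`,
and `f̂(S) = E[f(X) ∏_{i∈S} Xᵢ]` are the Fourier–Walsh coefficients.
Logs base 2.
-/

/-- The `±1` value of a bit: `false ↦ 1`, `true ↦ -1`. -/
def sgn (b : Bool) : ℝ := if b then -1 else 1

namespace BFUB

variable {n : ℕ}

/-- componentwise xor -/
def xw (a x : Fin n → Bool) : Fin n → Bool := fun i => xor (a i) (x i)

lemma xw_xw (a x : Fin n → Bool) : xw a (xw a x) = x := by
  funext i; simp [xw]

lemma xw_comm (a x : Fin n → Bool) : xw a x = xw x a := by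
  funext i; simp [xw, Bool.xor_comm]

def xwEquiv (a : Fin n → Bool) : (Fin n → Bool) ≃ (Fin n → Bool) :=
  ⟨xw a, xw a, xw_xw a, xw_xw a⟩

lemma sum_xw {M : Type*} [AddCommMonoid M] (a : Fin n → Bool)
    (F : (Fin n → Bool) → M) : ∑ x, F (xw a x) = ∑ x, F x :=
  Equiv.sum_comp (xwEquiv a) F

lemma sgn_xor (a b : Bool) : sgn (xor a b) = sgn a * sgn b := by
  cases a <;> cases b <;> norm_num [sgn]

lemma half_sgn (a b : Bool) : (1 + sgn a * sgn b) / 2 = if a = b then (1:ℝ) else 0 := by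
  cases a <;> cases b <;> norm_num [sgn]

def chi (S : Finset (Fin n)) (x : Fin n → Bool) : ℝ := ∏ i ∈ S, sgn (x i)

lemma chi_xw (S : Finset (Fin n)) (a x : Fin n → Bool) :
    chi S (xw a x) = chi S a * chi S x := by
  simp [chi, xw, sgn_xor, Finset.prod_mul_distrib]

def muB (α : ℝ) (z : Fin n → Bool) : ℝ := ∏ i, (if z i then α else 1 - α)

lemma muB_nonneg {α : ℝ} (h0 : 0 ≤ α) (h1 : α ≤ 1) (z : Fin n → Bool) :
    0 ≤ muB α z := by
  refine Finset.prod_nonneg fun i _ => ?_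
  cases z i <;> simp <;> linarith

lemma sum_muB (α : ℝ) : ∑ z : Fin n → Bool, muB α z = 1 := by
  unfold muB
  rw [← Fintype.prod_sum (κ := fun _ : Fin n => Bool) (fun _ b => if b then α else 1 - α)]
  simp

lemma sum_muB_chi (α : ℝ) (S : Finset (Fin n)) :
    ∑ z : Fin n → Bool, muB α z * chi S z = (1 - 2*α) ^ S.card := by
  have h1 : ∀ z : Fin n → Bool, muB α z * chi S z
      = ∏ i, ((if z i then α else 1 - α) * (if i ∈ S then sgn (z i) else 1)) := by
    intro z
    rw [show chi S z = ∏ i, (if i ∈ S then sgn (z i) else 1) from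
      (Fintype.prod_ite_mem S _).symm, muB, Finset.prod_mul_distrib]
  simp_rw [h1]
  rw [← Fintype.prod_sum (κ := fun _ : Fin n => Bool)
    (fun i b => (if b then α else 1 - α) * (if i ∈ S then sgn b else 1))]
  have h2 : ∀ i : Fin n, (∑ b : Bool, (if b then α else 1 - α) * (if i ∈ S then sgn b else 1))
      = if i ∈ S then (1 - 2*α) else 1 := by
    intro i
    by_cases h : i ∈ S <;> simp [h, sgn] <;> ring
  simp_rw [h2]
  rw [Fintype.prod_ite_mem, Finset.prod_const]

lemma sum_chi (u : Fin n → Bool) :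
    ∑ S : Finset (Fin n), chi S u = if u = (fun _ => false) then (2:ℝ)^n else 0 := by
  have h := Fintype.prod_add (fun i => sgn (u i)) (fun _ => (1:ℝ))
  simp only [Finset.prod_const_one, mul_one] at h
  rw [show (∑ S : Finset (Fin n), chi S u) = ∏ a, (sgn (u a) + 1) from h.symm]
  by_cases hu : u = (fun _ => false)
  · subst hu; simp [sgn]; norm_num
  · rw [if_neg hu]
    have : ∃ j, u j = true := by
      by_contra hc
      push_neg at hc
      exact hu (funext fun i => by simpa using hc i)
    obtain ⟨j, hj⟩ := this
    exact Finset.prod_eq_zero (Finset.mem_univ j) (by simp [hj, sgn])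

lemma sum_chi_mul (x x' : Fin n → Bool) :
    ∑ S : Finset (Fin n), chi S x * chi S x' = if x = x' then (2:ℝ)^n else 0 := by
  simp_rw [← chi_xw]
  rw [sum_chi]
  congr 1
  simp only [eq_iff_iff]
  constructor
  · intro h
    funext i
    have := congrFun h i
    simp only [xw] at this
    cases hx : x i <;> cases hx' : x' i <;> simp [hx, hx'] at this ⊢
  · intro h; subst h; funext i; simp [xw]

end BFUB

namespace BFUB
variable {n : ℕ}

lemma c_sum : ∑ _x : Fin n → Bool, ((1:ℝ)/2)^n = 1 := by
  rw [Finset.sum_const, Finset.card_univ]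
  have h : Fintype.card (Fin n → Bool) = 2 ^ n := by simp
  rw [h, nsmul_eq_mul]
  push_cast
  rw [← mul_pow]
  norm_num

/-- Fourier coefficient. -/
noncomputable def Fh (f : (Fin n → Bool) → Bool) (S : Finset (Fin n)) : ℝ :=
  ∑ x, ((1:ℝ)/2)^n * (sgn (f x) * chi S x)

/-- the conditional mean `E[sgn f(X) | Y = y]`. -/
noncomputable def gf (α : ℝ) (f : (Fin n → Bool) → Bool) (y : Fin n → Bool) : ℝ :=
  ∑ z, muB α z * sgn (f (xw y z))

lemma gf_coeff (α : ℝ) (f : (Fin n → Bool) → Bool) (w : Fin n → Bool)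
    (S : Finset (Fin n)) :
    ∑ x, ((1:ℝ)/2)^n * (gf α f (xw w x) * chi S x)
      = Fh f S * ((1 - 2*α) ^ S.card * chi S w) := by
  unfold gf
  simp_rw [Finset.sum_mul, Finset.mul_sum]
  rw [Finset.sum_comm]
  have h1 : ∀ z, ∑ x, ((1:ℝ)/2)^n * (muB α z * sgn (f (xw (xw w x) z)) * chi S x)
      = ∑ u, ((1:ℝ)/2)^n * (muB α z * sgn (f u) * (chi S w * chi S z * chi S u)) := by
    intro z
    rw [← sum_xw (xw w z) (fun x => ((1:ℝ)/2)^n * (muB α z * sgn (f (xw (xw w x) z)) * chi S x))]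
    refine Finset.sum_congr rfl fun u _ => ?_
    have e1 : xw (xw w (xw (xw w z) u)) z = u := by
      funext i
      simp only [xw]
      cases w i <;> cases z i <;> cases u i <;> rfl
    rw [e1, chi_xw, chi_xw]
  simp_rw [h1]
  conv_rhs => rw [Fh, ← sum_muB_chi α S]
  conv_rhs => simp only [Finset.sum_mul, Finset.mul_sum]
  refine Finset.sum_congr rfl fun u _ => Finset.sum_congr rfl fun z _ => ?_
  ring

lemma parseval (f : (Fin n → Bool) → Bool) (k : (Fin n → Bool) → ℝ) :
    ∑ S : Finset (Fin n), Fh f S * (∑ x, ((1:ℝ)/2)^n * (k x * chi S x))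
      = ∑ x, ((1:ℝ)/2)^n * (sgn (f x) * k x) := by
  unfold Fh
  simp_rw [Finset.sum_mul, Finset.mul_sum]
  rw [Finset.sum_comm]
  refine Finset.sum_congr rfl fun x _ => ?_
  rw [Finset.sum_comm]
  have h1 : ∀ x', ∑ S : Finset (Fin n),
      ((1:ℝ)/2)^n * (sgn (f x) * chi S x) * (((1:ℝ)/2)^n * (k x' * chi S x'))
      = ((1:ℝ)/2)^n * ((1:ℝ)/2)^n * (sgn (f x) * k x')
          * ∑ S : Finset (Fin n), chi S x * chi S x' := by
    intro x'
    rw [Finset.mul_sum]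
    refine Finset.sum_congr rfl fun S _ => ?_
    ring
  simp_rw [h1, sum_chi_mul, mul_ite, mul_zero]
  rw [Finset.sum_ite_eq]
  simp only [Finset.mem_univ, if_true]
  have : ((1:ℝ)/2)^n * ((1:ℝ)/2)^n * (2:ℝ)^n = ((1:ℝ)/2)^n := by
    rw [mul_assoc, ← mul_pow]; norm_num
  calc ((1:ℝ)/2)^n * ((1:ℝ)/2)^n * (sgn (f x) * k x) * (2:ℝ)^n
      = ((1:ℝ)/2)^n * ((1:ℝ)/2)^n * (2:ℝ)^n * (sgn (f x) * k x) := by ring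
    _ = ((1:ℝ)/2)^n * (sgn (f x) * k x) := by rw [this]

end BFUB


namespace BFUB
variable {n : ℕ}

lemma stab_eq (α : ℝ) (f : (Fin n → Bool) → Bool) (w : Fin n → Bool) :
    ∑ S : Finset (Fin n), (Fh f S)^2 * (1 - 2*α) ^ S.card * chi S w
      = ∑ x, ((1:ℝ)/2)^n * (sgn (f x) * gf α f (xw w x)) := by
  rw [← parseval f (fun x => gf α f (xw w x))]
  refine Finset.sum_congr rfl fun S _ => ?_
  rw [gf_coeff]
  ring

lemma jensen_logb {ι : Type*} [Fintype ι] [Nonempty ι] (w t : ι → ℝ)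
    (hw : ∀ i, 0 ≤ w i) (hw1 : ∑ i, w i = 1) (ht : ∀ i, 0 < t i) :
    ∑ i, w i * Real.logb 2 (t i) ≤ Real.logb 2 (∑ i, w i * t i) := by
  have amgm := Real.geom_mean_le_arith_mean_weighted Finset.univ w t
    (fun i _ => hw i) hw1 (fun i _ => (ht i).le)
  have hp : (0:ℝ) < ∏ i, t i ^ w i :=
    Finset.prod_pos fun i _ => Real.rpow_pos_of_pos (ht i) _
  have hlog : Real.logb 2 (∏ i, t i ^ w i) = ∑ i, w i * Real.logb 2 (t i) := by
    unfold Real.logb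
    rw [Real.log_prod (fun i _ => (Real.rpow_pos_of_pos (ht i) _).ne'),
      Finset.sum_div]
    refine Finset.sum_congr rfl fun i _ => ?_
    rw [Real.log_rpow (ht i)]
    ring
  calc ∑ i, w i * Real.logb 2 (t i) = Real.logb 2 (∏ i, t i ^ w i) := hlog.symm
    _ ≤ Real.logb 2 (∑ i, w i * t i) :=
        Real.logb_le_logb_of_le (by norm_num) hp amgm

end BFUB

theorem boolean_function_fourier_upper_bound
    (n : ℕ) (α : ℝ) (hα0 : 0 ≤ α) (hα : α ≤ 1 / 2)
    (f : (Fin n → Bool) → Bool)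
    -- distribution of X (uniform) and of Z, W (value -1, i.e. `true`, w.p. α)
    (μX : (Fin n → Bool) → ℝ) (hμX : ∀ x, μX x = (1 / 2 : ℝ) ^ n)
    (μB : (Fin n → Bool) → ℝ)
    (hμB : ∀ z, μB z = ∏ i, (if z i then α else 1 - α))
    -- joint law of (Y, f(X)), where Y = X·Z (componentwise product = XOR)
    (q : (Fin n → Bool) → Bool → ℝ)
    (hq : ∀ y b, q y b = ∑ x, (if f x = b then (1 : ℝ) else 0) * μX x *
      μB (fun i => xor (x i) (y i)))
    -- marginals of Y and of f(X)
    (qY : (Fin n → Bool) → ℝ) (hqY : ∀ y, qY y = ∑ b, q y b)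
    (qB : Bool → ℝ) (hqB : ∀ b, qB b = ∑ x, μX x * (if f x = b then (1 : ℝ) else 0))
    -- Fourier–Walsh coefficients of f
    (fhat : Finset (Fin n) → ℝ)
    (hfhat : ∀ S, fhat S = ∑ x, μX x * (sgn (f x) * ∏ i ∈ S, sgn (x i))) :
    (∑ y, ∑ b, q y b * Real.logb 2 (q y b / (qY y * qB b))) ≤
      (-(∑ b, qB b * Real.logb 2 (qB b))) - 1 +
        ∑ w, μB w * Real.logb 2
          (1 + ∑ S : Finset (Fin n),
            fhat S ^ 2 * (1 - 2 * α) ^ S.card * ∏ i ∈ S, sgn (w i)) := by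
  classical
  have hα1 : α ≤ 1 := hα.trans (by norm_num)
  set c : ℝ := (1 / 2 : ℝ) ^ n with hc
  have hc0 : (0 : ℝ) < c := by positivity
  have hcsum : (∑ _x : Fin n → Bool, c) = 1 := by rw [hc]; exact BFUB.c_sum
  have hμB' : ∀ z, μB z = BFUB.muB α z := hμB
  have hμBnn : ∀ z : Fin n → Bool, 0 ≤ BFUB.muB α z := BFUB.muB_nonneg hα0 hα1
  set p : (Fin n → Bool) → Bool → ℝ :=
    fun y b => ∑ z, BFUB.muB α z * (if f (BFUB.xw y z) = b then 1 else 0) with hpdef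
  have hpeq : ∀ y b, p y b
      = ∑ z, BFUB.muB α z * (if f (BFUB.xw y z) = b then 1 else 0) := fun _ _ => rfl
  have hp_nonneg : ∀ y b, 0 ≤ p y b := by
    intro y b
    refine Finset.sum_nonneg fun z _ => mul_nonneg (hμBnn z) ?_
    split <;> norm_num
  -- q = c * p
  have hqp : ∀ y b, q y b = c * p y b := by
    intro y b
    rw [hq, ← BFUB.sum_xw y (fun x => (if f x = b then (1 : ℝ) else 0) * μX x *
      μB (fun i => xor (x i) (y i))), hpeq, Finset.mul_sum]
    refine Finset.sum_congr rfl fun z _ => ?_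
    have e1 : (fun i => xor ((BFUB.xw y z) i) (y i)) = z := by
      funext i; simp only [BFUB.xw]; cases y i <;> cases z i <;> rfl
    rw [hμX, e1, hμB' z]
    ring
  have hqYc : ∀ y, qY y = c := by
    intro y
    rw [hqY, Fintype.sum_bool, hqp, hqp, ← mul_add]
    have h1 : p y true + p y false = 1 := by
      rw [hpeq, hpeq, ← Finset.sum_add_distrib]
      have h2 : ∀ z : Fin n → Bool,
          BFUB.muB α z * (if f (BFUB.xw y z) = true then (1:ℝ) else 0)
            + BFUB.muB α z * (if f (BFUB.xw y z) = false then (1:ℝ) else 0)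
          = BFUB.muB α z := by
        intro z; cases f (BFUB.xw y z) <;> simp
      rw [Finset.sum_congr rfl fun z _ => h2 z, BFUB.sum_muB]
    rw [h1, mul_one]
  have hq_nonneg : ∀ y b, 0 ≤ q y b := fun y b =>
    (hqp y b) ▸ mul_nonneg hc0.le (hp_nonneg y b)
  have hqB' : ∀ b, qB b = ∑ x, c * (if f x = b then 1 else 0) := by
    intro b; rw [hqB]; exact Finset.sum_congr rfl fun x _ => by rw [hμX]
  have hmarg : ∀ b, ∑ y, q y b = qB b := by
    intro b
    simp only [hq]
    rw [Finset.sum_comm, hqB']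
    refine Finset.sum_congr rfl fun x _ => ?_
    have h1 : ∀ y, (if f x = b then (1 : ℝ) else 0) * μX x * μB (fun i => xor (x i) (y i))
        = ((if f x = b then (1 : ℝ) else 0) * c) * BFUB.muB α (BFUB.xw x y) := by
      intro y
      rw [show (fun i => xor (x i) (y i)) = BFUB.xw x y from rfl, hμX, hμB']
    simp_rw [h1]
    rw [← Finset.mul_sum, BFUB.sum_xw x (fun u => BFUB.muB α u), BFUB.sum_muB]
    ring
  have hqB_pos : ∀ y b, 0 < q y b → 0 < qB b := by
    intro y b h
    rw [← hmarg b]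
    have h2 := Finset.single_le_sum (f := fun y' => q y' b)
      (fun y' _ => hq_nonneg y' b) (Finset.mem_univ y)
    linarith
  -- split the mutual information
  have key1 : ∀ y b, q y b * Real.logb 2 (q y b / (qY y * qB b))
      = c * (p y b * Real.logb 2 (p y b)) - q y b * Real.logb 2 (qB b) := by
    intro y b
    rcases eq_or_lt_of_le (hp_nonneg y b) with h0 | hpos
    · rw [hqp, ← h0]; simp
    · have hqpos : 0 < q y b := by rw [hqp]; exact mul_pos hc0 hpos
      have hBpos := hqB_pos y b hqpos
      rw [hqYc, hqp, mul_div_mul_left _ _ hc0.ne',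
        Real.logb_div hpos.ne' hBpos.ne']
      ring
  have hLHS : (∑ y, ∑ b, q y b * Real.logb 2 (q y b / (qY y * qB b)))
      = c * (∑ y, ∑ b, p y b * Real.logb 2 (p y b))
        - ∑ b, qB b * Real.logb 2 (qB b) := by
    simp_rw [key1, Finset.sum_sub_distrib]
    congr 1
    · rw [Finset.mul_sum]
      exact Finset.sum_congr rfl fun y _ => (Finset.mul_sum _ _ _).symm
    · rw [Finset.sum_comm]
      exact Finset.sum_congr rfl fun b _ => by rw [← Finset.sum_mul, hmarg]
  rw [hLHS]
  -- conditional mean and positivity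
  have hpg : ∀ y b, p y b = (1 + sgn b * BFUB.gf α f y) / 2 := by
    intro y b
    have h1 : ∀ z, BFUB.muB α z * (if f (BFUB.xw y z) = b then (1 : ℝ) else 0)
        = BFUB.muB α z * (1 / 2) + (BFUB.muB α z * sgn (f (BFUB.xw y z))) * (sgn b / 2) := by
      intro z
      rw [← BFUB.half_sgn (f (BFUB.xw y z)) b]
      ring
    rw [hpeq]
    simp_rw [h1]
    rw [Finset.sum_add_distrib, ← Finset.sum_mul, ← Finset.sum_mul, BFUB.sum_muB,
      show (∑ z, BFUB.muB α z * sgn (f (BFUB.xw y z))) = BFUB.gf α f y from rfl]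
    ring
  have hppos : ∀ (x z : Fin n → Bool), 0 < BFUB.muB α z → 0 < p (BFUB.xw z x) (f x) := by
    intro x z hz
    have e : BFUB.xw (BFUB.xw z x) z = x := by
      funext i; simp only [BFUB.xw]; cases z i <;> cases x i <;> rfl
    have hle : BFUB.muB α z * (if f (BFUB.xw (BFUB.xw z x) z) = f x then (1:ℝ) else 0)
        ≤ p (BFUB.xw z x) (f x) := by
      rw [hpeq]
      exact Finset.single_le_sum (f := fun z' => BFUB.muB α z' *
        (if f (BFUB.xw (BFUB.xw z x) z') = f x then (1:ℝ) else 0))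
        (fun z' _ => mul_nonneg (hμBnn z') (by split <;> norm_num)) (Finset.mem_univ z)
    rw [e] at hle
    simp only [eq_self_iff_true, if_true, mul_one] at hle
    linarith
  -- rewrite the inner entropy sum
  have hT1 : ∀ y, (∑ b, p y b * Real.logb 2 (p y b))
      = ∑ z, BFUB.muB α z * Real.logb 2 (p y (f (BFUB.xw y z))) := by
    intro y
    have h1 : ∀ b, p y b * Real.logb 2 (p y b)
        = ∑ z, BFUB.muB α z * ((if f (BFUB.xw y z) = b then (1:ℝ) else 0)
            * Real.logb 2 (p y b)) := by
      intro b
      nth_rewrite 1 [hpeq y b]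
      rw [Finset.sum_mul]
      exact Finset.sum_congr rfl fun z _ => by ring
    simp_rw [h1]
    rw [Finset.sum_comm]
    refine Finset.sum_congr rfl fun z _ => ?_
    rw [← Finset.mul_sum]
    congr 1
    cases hfa : f (BFUB.xw y z) <;> simp [Fintype.sum_bool]
  have hT2 : (∑ y, ∑ z, BFUB.muB α z * Real.logb 2 (p y (f (BFUB.xw y z))))
      = ∑ z, ∑ x, BFUB.muB α z * Real.logb 2 (p (BFUB.xw z x) (f x)) := by
    rw [Finset.sum_comm]
    refine Finset.sum_congr rfl fun z _ => ?_
    conv_rhs => rw [← BFUB.sum_xw z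
      (fun x => BFUB.muB α z * Real.logb 2 (p (BFUB.xw z x) (f x)))]
    refine Finset.sum_congr rfl fun y _ => ?_
    simp only [BFUB.xw_xw]
    rw [BFUB.xw_comm y z]
  -- Fourier coefficients agree
  have hFh : ∀ S, fhat S = BFUB.Fh f S := by
    intro S
    rw [hfhat]
    exact Finset.sum_congr rfl fun x _ => by rw [hμX]; rfl
  -- the per-noise-realization bound
  have key2 : ∀ z : Fin n → Bool,
      (∑ x, c * (BFUB.muB α z * Real.logb 2 (p (BFUB.xw z x) (f x))))
      ≤ BFUB.muB α z * (Real.logb 2 (1 + ∑ S : Finset (Fin n),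
          fhat S ^ 2 * (1 - 2 * α) ^ S.card * ∏ i ∈ S, sgn (z i)) - 1) := by
    intro z
    rcases eq_or_lt_of_le (hμBnn z) with h0 | hz
    · simp [← h0]
    · set t : (Fin n → Bool) → ℝ := fun x => 1 + sgn (f x) * BFUB.gf α f (BFUB.xw z x)
        with htdef
      have ht : ∀ x, 0 < t x := by
        intro x
        have h2 := hppos x z hz
        rw [hpg] at h2
        simp only [htdef]
        linarith
      have hlp : ∀ x, Real.logb 2 (p (BFUB.xw z x) (f x)) = Real.logb 2 (t x) - 1 := by
        intro x
        rw [hpg, show (1 + sgn (f x) * BFUB.gf α f (BFUB.xw z x)) = t x from rfl,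
          Real.logb_div (ht x).ne' (by norm_num),
          Real.logb_self_eq_one (by norm_num)]
      simp_rw [hlp]
      have hstab : (∑ x, c * t x) = 1 + ∑ S : Finset (Fin n),
          fhat S ^ 2 * (1 - 2 * α) ^ S.card * ∏ i ∈ S, sgn (z i) := by
        simp only [htdef, mul_add, mul_one]
        rw [Finset.sum_add_distrib, hcsum]
        congr 1
        rw [show (∑ S : Finset (Fin n), fhat S ^ 2 * (1 - 2 * α) ^ S.card
            * ∏ i ∈ S, sgn (z i))
          = ∑ S : Finset (Fin n), BFUB.Fh f S ^ 2 * (1 - 2 * α) ^ S.card * BFUB.chi S z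
          from Finset.sum_congr rfl fun S _ => by rw [hFh]; rfl]
        rw [BFUB.stab_eq]
      have hj := BFUB.jensen_logb (fun _ => c) t (fun _ => hc0.le) BFUB.c_sum ht
      rw [hstab] at hj
      calc (∑ x, c * (BFUB.muB α z * (Real.logb 2 (t x) - 1)))
          = BFUB.muB α z * ((∑ x, c * Real.logb 2 (t x)) - 1) := by
            have h3 : ∀ x, c * (BFUB.muB α z * (Real.logb 2 (t x) - 1))
                = BFUB.muB α z * (c * Real.logb 2 (t x)) - BFUB.muB α z * c := by
              intro x; ring
            simp_rw [h3]
            have e2 : (∑ x, BFUB.muB α z * (c * Real.logb 2 (t x)))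
                = BFUB.muB α z * ∑ x, c * Real.logb 2 (t x) := (Finset.mul_sum _ _ _).symm
            have e3 : (∑ _x : Fin n → Bool, BFUB.muB α z * c) = BFUB.muB α z := by
              rw [← Finset.mul_sum, hcsum, mul_one]
            rw [Finset.sum_sub_distrib, e2, e3]
            ring
        _ ≤ BFUB.muB α z * (Real.logb 2 (1 + ∑ S : Finset (Fin n),
              fhat S ^ 2 * (1 - 2 * α) ^ S.card * ∏ i ∈ S, sgn (z i)) - 1) := by
            refine mul_le_mul_of_nonneg_left ?_ hz.le
            exact sub_le_sub_right hj 1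
  -- put everything together
  have main : c * (∑ y, ∑ b, p y b * Real.logb 2 (p y b))
      ≤ -1 + ∑ w, μB w * Real.logb 2
          (1 + ∑ S : Finset (Fin n),
            fhat S ^ 2 * (1 - 2 * α) ^ S.card * ∏ i ∈ S, sgn (w i)) := by
    calc c * (∑ y, ∑ b, p y b * Real.logb 2 (p y b))
        = ∑ z, ∑ x, c * (BFUB.muB α z * Real.logb 2 (p (BFUB.xw z x) (f x))) := by
          simp_rw [hT1]
          rw [hT2, Finset.mul_sum]
          exact Finset.sum_congr rfl fun z _ => Finset.mul_sum _ _ _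
      _ ≤ ∑ z, BFUB.muB α z * (Real.logb 2 (1 + ∑ S : Finset (Fin n),
            fhat S ^ 2 * (1 - 2 * α) ^ S.card * ∏ i ∈ S, sgn (z i)) - 1) :=
          Finset.sum_le_sum fun z _ => key2 z
      _ = -1 + ∑ w, μB w * Real.logb 2
            (1 + ∑ S : Finset (Fin n),
              fhat S ^ 2 * (1 - 2 * α) ^ S.card * ∏ i ∈ S, sgn (w i)) := by
          simp_rw [mul_sub, mul_one, Finset.sum_sub_distrib, BFUB.sum_muB]
          rw [show (∑ w, μB w * Real.logb 2 (1 + ∑ S : Finset (Fin n),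
              fhat S ^ 2 * (1 - 2 * α) ^ S.card * ∏ i ∈ S, sgn (w i)))
            = ∑ w, BFUB.muB α w * Real.logb 2 (1 + ∑ S : Finset (Fin n),
              fhat S ^ 2 * (1 - 2 * α) ^ S.card * ∏ i ∈ S, sgn (w i))
            from Finset.sum_congr rfl fun w _ => by rw [hμB']]
          ring
  linarith [main]
end
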